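/- arXiv:1909.11312 — 12 statements merged into one kernel-verified Lean document; each statement's English description precedes it below -/
import Mathlib

section
/- Let r be a solution of the classical Yang–Baxter equation on L. Then for all x, y ∈ L: [R(x), R(y)] − R([x, R(y)]) + R([R*(x), y]) = 0. -/
/-!
Contract the CYBE tensor with `ω(·, x)` in the second and `ω(·, y)` in the third tensor factor.
Each of the three terms of the equation becomes one term of the identity: the first gives
`⁅R x, R y⁆`, the second, after invariance moves the bracket onto `x`, gives `R ⁅x, R y⁆`, and the
third, after invariance moves the bracket onto `y`, gives `R ⁅R* x, y⁆`, using the formula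
`R* x = ∑ ω(a i, x) b i` for the adjoint.
-/

open TensorProduct

namespace LinearMap.BilinForm

variable {K M ι : Type*} [CommRing K] [AddCommGroup M] [Module K M] [Fintype ι]

theorem adjoint_apply_eq_sum {ω : LinearMap.BilinForm K M} (hnd : ω.Nondegenerate)
    (hsymm : ∀ x y : M, ω x y = ω y x) {a b : ι → M} {R Rstar : M →ₗ[K] M}
    (hR : ∀ x : M, R x = ∑ i, ω (b i) x • a i) (hadj : ∀ x y : M, ω (R x) y = ω x (Rstar y))
    (y : M) : Rstar y = ∑ i, ω (a i) y • b i := by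
  rw [← sub_eq_zero]
  refine hnd.2 _ fun w => ?_
  simp only [map_sub, map_sum, map_smul, smul_eq_mul, ← hadj, hR, LinearMap.sum_apply,
    LinearMap.smul_apply, sub_eq_zero]
  exact Finset.sum_congr rfl fun i _ => by rw [hsymm w (b i), mul_comm]

def contractTail (ω : LinearMap.BilinForm K M) (x y : M) : M ⊗[K] (M ⊗[K] M) →ₗ[K] M :=
  TensorProduct.lift
    ((LinearMap.lsmul K M).comp (TensorProduct.lift ((ω.flip x).smulRight (ω.flip y)))).flip

@[simp]
theorem contractTail_tmul (ω : LinearMap.BilinForm K M) (x y u v w : M) :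
    contractTail ω x y (u ⊗ₜ (v ⊗ₜ w)) = (ω v x * ω w y) • u := by
  simp [contractTail]

end LinearMap.BilinForm

open LinearMap.BilinForm

section Contraction

variable {K L ι : Type*} [CommRing K] [LieRing L] [LieAlgebra K L] [Fintype ι]
  {ω : LinearMap.BilinForm K L} {a b : ι → L} {R : L →ₗ[K] L}

theorem contractTail_sum_lie_tmul (hR : ∀ x : L, R x = ∑ i, ω (b i) x • a i) (x y : L) :
    contractTail ω x y (∑ i, ∑ j, ⁅a i, a j⁆ ⊗ₜ[K] (b i ⊗ₜ[K] b j)) = ⁅R x, R y⁆ := by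
  simp only [map_sum, contractTail_tmul, hR, sum_lie, lie_sum, smul_lie, lie_smul,
    Finset.smul_sum, smul_smul]
  rw [Finset.sum_comm]
  simp only [mul_comm]

theorem contractTail_sum_tmul_lie_tmul (hsymm : ∀ x y : L, ω x y = ω y x)
    (hinv : ∀ x y z : L, ω ⁅x, y⁆ z = ω x ⁅y, z⁆)
    (hR : ∀ x : L, R x = ∑ i, ω (b i) x • a i) (x y : L) :
    contractTail ω x y (∑ i, ∑ j, a i ⊗ₜ[K] (⁅a j, b i⁆ ⊗ₜ[K] b j)) = R ⁅x, R y⁆ := by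
  have hcycle : ∀ i j, ω ⁅a j, b i⁆ x = ω (b i) ⁅x, a j⁆ := fun i j => by
    rw [hinv, hsymm, hinv]
  simp only [map_sum, contractTail_tmul, hR, lie_sum, lie_smul, map_smul, smul_eq_mul,
    hcycle, Finset.sum_smul, mul_comm]

theorem contractTail_sum_tmul_tmul_lie (hinv : ∀ x y z : L, ω ⁅x, y⁆ z = ω x ⁅y, z⁆)
    {Rstar : L →ₗ[K] L} (hR : ∀ x : L, R x = ∑ i, ω (b i) x • a i)
    (hRstar : ∀ x : L, Rstar x = ∑ i, ω (a i) x • b i) (x y : L) :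
    contractTail ω x y (∑ i, ∑ j, a i ⊗ₜ[K] (a j ⊗ₜ[K] ⁅b i, b j⁆)) = R ⁅Rstar x, y⁆ := by
  simp only [map_sum, contractTail_tmul, hR, hRstar, sum_lie, smul_lie, map_smul, smul_eq_mul,
    hinv, Finset.sum_smul]

end Contraction

theorem stmt_0_general (F : Type*) [Field F]
    (L : Type*) [LieRing L] [LieAlgebra F L]
    (ω : LinearMap.BilinForm F L)
    (hnd : ω.Nondegenerate)
    (hsymm : ∀ x y : L, ω x y = ω y x)
    (hinv : ∀ x y z : L, ω ⁅x, y⁆ z = ω x ⁅y, z⁆)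
    (ι : Type*) [Fintype ι] (a b : ι → L)
    (hCYBE : ∑ i, ∑ j, (⁅a i, a j⁆ ⊗ₜ[F] (b i ⊗ₜ[F] b j)
        - a i ⊗ₜ[F] (⁅a j, b i⁆ ⊗ₜ[F] b j)
        + a i ⊗ₜ[F] (a j ⊗ₜ[F] ⁅b i, b j⁆)) = (0 : L ⊗[F] (L ⊗[F] L)))
    (R Rstar : L →ₗ[F] L)
    (hR : ∀ x : L, R x = ∑ i, ω (b i) x • a i)
    (hadj : ∀ x y : L, ω (R x) y = ω x (Rstar y)) :
    ∀ x y : L, ⁅R x, R y⁆ - R ⁅x, R y⁆ + R ⁅Rstar x, y⁆ = 0 := by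
  intro x y
  have hRstar := adjoint_apply_eq_sum hnd hsymm hR hadj
  have key := congrArg (contractTail ω x y) hCYBE
  simp only [Finset.sum_add_distrib, Finset.sum_sub_distrib, map_add, map_sub, map_zero] at key
  rwa [contractTail_sum_lie_tmul hR, contractTail_sum_tmul_lie_tmul hsymm hinv hR,
    contractTail_sum_tmul_tmul_lie hinv hR hRstar] at key

theorem stmt_0 (F : Type*) [Field F] [CharZero F]
    (L : Type*) [LieRing L] [LieAlgebra F L] [FiniteDimensional F L]
    (ω : LinearMap.BilinForm F L)
    (hnd : ω.Nondegenerate)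
    (hsymm : ∀ x y : L, ω x y = ω y x)
    (hinv : ∀ x y z : L, ω ⁅x, y⁆ z = ω x ⁅y, z⁆)
    (ι : Type*) [Fintype ι] (a b : ι → L)
    (hCYBE : ∑ i, ∑ j, (⁅a i, a j⁆ ⊗ₜ[F] (b i ⊗ₜ[F] b j)
        - a i ⊗ₜ[F] (⁅a j, b i⁆ ⊗ₜ[F] b j)
        + a i ⊗ₜ[F] (a j ⊗ₜ[F] ⁅b i, b j⁆)) = (0 : L ⊗[F] (L ⊗[F] L)))
    (R Rstar : L →ₗ[F] L)
    (hR : ∀ x : L, R x = ∑ i, ω (b i) x • a i)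
    (hadj : ∀ x y : L, ω (R x) y = ω x (Rstar y)) :
    ∀ x y : L, ⁅R x, R y⁆ - R ⁅x, R y⁆ + R ⁅Rstar x, y⁆ = 0 :=
  stmt_0_general F L ω hnd hsymm hinv ι a b hCYBE R Rstar hR hadj
end

section
/- Let r be a solution of the classical Yang–Baxter equation on L. Then for all x, y ∈ L: [R*(x), R*(y)] + R*([x, R(y)]) − R*([R*(x), y]) = 0. -/
/-!
Symmetry and nondegeneracy of `ω` make `R*` the operator of the flipped tensor `Σ bᵢ ⊗ aᵢ`.
Contract the CYBE tensor in `L ⊗ L ⊗ L` against `ω(·, u) ⊗ ω(·, v) ⊗ id`: by invariance of `ω`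
its three double sums become `R*⁅u, R v⁆`, `R*⁅R* u, v⁆` and `⁅R* u, R* v⁆`, and the contraction
of `0` is `0`.
-/

open TensorProduct

namespace LinearMap.BilinForm

variable {F L ι : Type*} [Field F] [LieRing L] [LieAlgebra F L] [Fintype ι]
  (ω : LinearMap.BilinForm F L) (a b : ι → L)

def tensorOperator : L →ₗ[F] L :=
  ∑ i, (ω (b i)).smulRight (a i)

@[simp]
theorem tensorOperator_apply (x : L) : ω.tensorOperator a b x = ∑ i, ω (b i) x • a i := by
  simp [tensorOperator]

theorem eq_tensorOperator_swap_of_adjoint (hnd : ω.SeparatingRight)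
    (hsymm : ∀ x y : L, ω x y = ω y x) (S : L →ₗ[F] L)
    (hadj : ∀ x y : L, ω (ω.tensorOperator a b x) y = ω x (S y)) :
    S = ω.tensorOperator b a := by
  ext y
  refine sub_eq_zero.mp (hnd _ fun x => ?_)
  rw [map_sub, ← hadj, sub_eq_zero]
  simp only [tensorOperator_apply, map_sum, map_smul, LinearMap.sum_apply,
    LinearMap.smul_apply, smul_eq_mul]
  exact Finset.sum_congr rfl fun i _ => by rw [hsymm (b i) x, mul_comm]

def contract (u v : L) : L ⊗[F] (L ⊗[F] L) →ₗ[F] L :=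
  TensorProduct.lift <| (ω.flip u).smulRight <|
    TensorProduct.lift <| (ω.flip v).smulRight LinearMap.id

@[simp]
theorem contract_tmul (u v x y z : L) :
    ω.contract u v (x ⊗ₜ (y ⊗ₜ z)) = (ω x u * ω y v) • z := by
  simp [contract, LinearMap.smulRight_apply, mul_smul]

def cybeTensor : L ⊗[F] (L ⊗[F] L) :=
  ∑ i, ∑ j, (⁅a i, a j⁆ ⊗ₜ[F] (b i ⊗ₜ[F] b j)
    - a i ⊗ₜ[F] (⁅a j, b i⁆ ⊗ₜ[F] b j)
    + a i ⊗ₜ[F] (a j ⊗ₜ[F] ⁅b i, b j⁆))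

variable {ω a b}

theorem lie_tensorOperator_swap (u v : L) :
    ⁅ω.tensorOperator b a u, ω.tensorOperator b a v⁆
      = ∑ i, ∑ j, (ω (a i) u * ω (a j) v) • ⁅b i, b j⁆ := by
  simp only [tensorOperator_apply, sum_lie, lie_sum, smul_lie, lie_smul, Finset.smul_sum,
    smul_smul]
  rw [Finset.sum_comm]
  simp only [mul_comm]

variable (hinv : ∀ x y z : L, ω ⁅x, y⁆ z = ω x ⁅y, z⁆)
include hinv

theorem tensorOperator_swap_lie_tensorOperator (u v : L) :
    ω.tensorOperator b a ⁅u, ω.tensorOperator a b v⁆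
      = ∑ i, ∑ j, (ω ⁅a i, a j⁆ u * ω (b i) v) • b j := by
  have hcyc : ∀ x y z : L, ω ⁅x, y⁆ z = ω y ⁅z, x⁆ := fun x y z => by
    rw [← lie_skew, ← neg_lie, hinv, map_neg, LinearMap.neg_apply, ← map_neg, lie_skew]
  simp only [tensorOperator_apply, lie_sum, lie_smul, map_sum, map_smul, Finset.smul_sum,
    smul_smul]
  refine Finset.sum_congr rfl fun i _ => Finset.sum_congr rfl fun j _ => ?_
  rw [hcyc, mul_comm]

theorem tensorOperator_swap_lie_tensorOperator_swap (u v : L) :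
    ω.tensorOperator b a ⁅ω.tensorOperator b a u, v⁆
      = ∑ i, ∑ j, (ω (a i) u * ω ⁅a j, b i⁆ v) • b j := by
  simp only [tensorOperator_apply, sum_lie, smul_lie, map_sum, map_smul, Finset.smul_sum,
    smul_smul, hinv]

theorem contract_cybeTensor (u v : L) :
    ω.contract u v (cybeTensor a b)
      = ω.tensorOperator b a ⁅u, ω.tensorOperator a b v⁆
        - ω.tensorOperator b a ⁅ω.tensorOperator b a u, v⁆
        + ⁅ω.tensorOperator b a u, ω.tensorOperator b a v⁆ := by
  simp only [cybeTensor, map_sum, map_sub, map_add, contract_tmul, Finset.sum_add_distrib,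
    Finset.sum_sub_distrib, tensorOperator_swap_lie_tensorOperator hinv,
    tensorOperator_swap_lie_tensorOperator_swap hinv, lie_tensorOperator_swap]

end LinearMap.BilinForm

open LinearMap.BilinForm in
theorem stmt_1_general
    (F : Type*) [Field F]
    (L : Type*) [LieRing L] [LieAlgebra F L]
    (ω : LinearMap.BilinForm F L)
    (hnd : ω.Nondegenerate)
    (hsymm : ∀ x y : L, ω x y = ω y x)
    (hinv : ∀ x y z : L, ω ⁅x, y⁆ z = ω x ⁅y, z⁆)
    (ι : Type*) [Fintype ι] (a b : ι → L)
    (R Rstar : L →ₗ[F] L)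
    (hR : ∀ x : L, R x = ∑ i, ω (b i) x • a i)
    (hadj : ∀ x y : L, ω (R x) y = ω x (Rstar y))
    (hCYBE : ∑ i, ∑ j, (⁅a i, a j⁆ ⊗ₜ[F] (b i ⊗ₜ[F] b j)
        - a i ⊗ₜ[F] (⁅a j, b i⁆ ⊗ₜ[F] b j)
        + a i ⊗ₜ[F] (a j ⊗ₜ[F] ⁅b i, b j⁆)) = (0 : L ⊗[F] (L ⊗[F] L))) :
    ∀ x y : L, ⁅Rstar x, Rstar y⁆ + Rstar ⁅x, R y⁆ - Rstar ⁅Rstar x, y⁆ = 0 := by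
  intro x y
  obtain rfl : R = ω.tensorOperator a b := LinearMap.ext fun x => by rw [hR, tensorOperator_apply]
  obtain rfl := ω.eq_tensorOperator_swap_of_adjoint a b hnd.2 hsymm Rstar hadj
  calc _ = ω.contract x y (cybeTensor a b) := by rw [contract_cybeTensor hinv]; abel
    _ = 0 := by rw [show cybeTensor a b = 0 from hCYBE, map_zero]

theorem stmt_1
    (F : Type*) [Field F] [CharZero F]
    (L : Type*) [LieRing L] [LieAlgebra F L] [FiniteDimensional F L]
    (ω : LinearMap.BilinForm F L)
    (hnd : ω.Nondegenerate)
    (hsymm : ∀ x y : L, ω x y = ω y x)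
    (hinv : ∀ x y z : L, ω ⁅x, y⁆ z = ω x ⁅y, z⁆)
    (ι : Type*) [Fintype ι] (a b : ι → L)
    (R Rstar : L →ₗ[F] L)
    (hR : ∀ x : L, R x = ∑ i, ω (b i) x • a i)
    (hadj : ∀ x y : L, ω (R x) y = ω x (Rstar y))
    (hCYBE : ∑ i, ∑ j, (⁅a i, a j⁆ ⊗ₜ[F] (b i ⊗ₜ[F] b j)
        - a i ⊗ₜ[F] (⁅a j, b i⁆ ⊗ₜ[F] b j)
        + a i ⊗ₜ[F] (a j ⊗ₜ[F] ⁅b i, b j⁆)) = (0 : L ⊗[F] (L ⊗[F] L))) :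
    ∀ x y : L, ⁅Rstar x, Rstar y⁆ + Rstar ⁅x, R y⁆ - Rstar ⁅Rstar x, y⁆ = 0 :=
  stmt_1_general F L ω hnd hsymm hinv ι a b R Rstar hR hadj hCYBE
end

section
/- The element r + τ(r) is L-invariant if and only if R + R* lies in the centroid of L, that is, [(R + R*)(x), y] = (R + R*)([x, y]) for all x, y ∈ L. -/
/-!
Identify `L ⊗ L` with `End L` through `u ⊗ v ↦ ω(v, ·) u`; this sends `r` to `R` and `τ(r)` to
`R*`. By invariance of `ω`, the tensor `Σ ([a_i, y] ⊗ b_i + a_i ⊗ [b_i, y])` is sent to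
`x ↦ [R x, y] + R [y, x]`, so `y` annihilates `r + τ(r)` iff `[(R + R*) x, y] = (R + R*) [x, y]`
for all `x`. Since the identification is injective (`ω` is nondegenerate and `L` is
finite-dimensional), this is the claimed equivalence.
-/

open TensorProduct

namespace LinearMap.BilinForm

section CommRing

variable {K M : Type*} [CommRing K] [AddCommGroup M] [Module K M] (ω : LinearMap.BilinForm K M)

noncomputable def tensorToEnd : M ⊗[K] M →ₗ[K] M →ₗ[K] M :=
  dualTensorHom K M M ∘ₗ TensorProduct.map ω LinearMap.id ∘ₗ (TensorProduct.comm K M M).toLinearMap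

@[simp]
theorem tensorToEnd_tmul (u v x : M) : ω.tensorToEnd (u ⊗ₜ v) x = ω v x • u := by
  simp [tensorToEnd, dualTensorHom_apply]

variable {ω}

theorem eq_sum_of_isAdjointPair {ι : Type*} [Fintype ι] (a b : ι → M) (R Rstar : M →ₗ[K] M)
    (hnd : ω.Nondegenerate) (hsymm : ∀ x y, ω x y = ω y x)
    (hR : ∀ x, R x = ∑ i, ω (b i) x • a i) (hadj : LinearMap.IsAdjointPair ω ω R Rstar)
    (x : M) : Rstar x = ∑ i, ω (a i) x • b i := by
  refine sub_eq_zero.mp <| hnd.1 _ fun u => ?_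
  rw [hsymm, map_sub, sub_eq_zero, ← hadj u x, hR u]
  simp only [map_sum, map_smul, LinearMap.sum_apply, LinearMap.smul_apply, smul_eq_mul]
  exact Finset.sum_congr rfl fun i _ => by rw [hsymm (b i) u, hsymm (a i) x, mul_comm]

end CommRing

theorem tensorToEnd_injective {K M : Type*} [Field K] [AddCommGroup M] [Module K M]
    [FiniteDimensional K M] {ω : LinearMap.BilinForm K M} (hnd : ω.Nondegenerate) :
    Function.Injective ω.tensorToEnd := by
  have hmap : TensorProduct.map ω LinearMap.id =
      (TensorProduct.congr (ω.toDual hnd) (LinearEquiv.refl K M)).toLinearMap := by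
    ext; rfl
  simp only [tensorToEnd, LinearMap.coe_comp, hmap, LinearEquiv.coe_coe]
  exact dualTensorHom_bijective.1.comp <| (LinearEquiv.injective _).comp (LinearEquiv.injective _)

theorem tensorToEnd_sum_lie_tmul_add_tmul_lie {K L : Type*} [CommRing K] [LieRing L]
    [LieAlgebra K L] {ω : LinearMap.BilinForm K L} (hinv : ∀ x y z : L, ω ⁅x, y⁆ z = ω x ⁅y, z⁆)
    {ι : Type*} [Fintype ι] (a b : ι → L) (R : L →ₗ[K] L) (hR : ∀ x, R x = ∑ i, ω (b i) x • a i)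
    (x y : L) :
    ω.tensorToEnd (∑ i, (⁅a i, y⁆ ⊗ₜ[K] b i + a i ⊗ₜ[K] ⁅b i, y⁆)) x = ⁅R x, y⁆ + R ⁅y, x⁆ := by
  simp only [map_sum, map_add, LinearMap.sum_apply, LinearMap.add_apply, tensorToEnd_tmul, hinv,
    Finset.sum_add_distrib, hR, sum_lie, smul_lie]

end LinearMap.BilinForm

theorem LieAlgebra.lie_apply_add_apply_lie_eq_zero_iff {K L : Type*} [CommRing K] [LieRing L]
    [LieAlgebra K L] (D : L →ₗ[K] L) :
    (∀ x y : L, ⁅D x, y⁆ + D ⁅y, x⁆ = 0) ↔ ∀ x y : L, ⁅D x, y⁆ = D ⁅x, y⁆ := by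
  refine forall_congr' fun x => forall_congr' fun y => ?_
  rw [← lie_skew x y, map_neg, add_eq_zero_iff_eq_neg]

theorem stmt_2_general
    (F : Type*) [Field F]
    (L : Type*) [LieRing L] [LieAlgebra F L] [FiniteDimensional F L]
    (ω : LinearMap.BilinForm F L)
    (hnd : ω.Nondegenerate)
    (hsymm : ∀ x y : L, ω x y = ω y x)
    (hinv : ∀ x y z : L, ω ⁅x, y⁆ z = ω x ⁅y, z⁆)
    (ι : Type*) [Fintype ι] (a b : ι → L)
    (R Rstar : L →ₗ[F] L)
    (hR : ∀ x : L, R x = ∑ i, ω (b i) x • a i)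
    (hadj : ∀ x y : L, ω (R x) y = ω x (Rstar y))
    : (∀ y : L, ∑ i, (⁅a i, y⁆ ⊗ₜ[F] b i + a i ⊗ₜ[F] ⁅b i, y⁆
        + ⁅b i, y⁆ ⊗ₜ[F] a i + b i ⊗ₜ[F] ⁅a i, y⁆) = (0 : L ⊗[F] L))
      ↔ (∀ x y : L, ⁅R x + Rstar x, y⁆ = R ⁅x, y⁆ + Rstar ⁅x, y⁆) := by
  have hRstar := LinearMap.BilinForm.eq_sum_of_isAdjointPair a b R Rstar hnd hsymm hR hadj
  have hsplit (y : L) : ∑ i, (⁅a i, y⁆ ⊗ₜ[F] b i + a i ⊗ₜ[F] ⁅b i, y⁆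
        + ⁅b i, y⁆ ⊗ₜ[F] a i + b i ⊗ₜ[F] ⁅a i, y⁆) =
      ∑ i, (⁅a i, y⁆ ⊗ₜ[F] b i + a i ⊗ₜ[F] ⁅b i, y⁆) +
        ∑ i, (⁅b i, y⁆ ⊗ₜ[F] a i + b i ⊗ₜ[F] ⁅a i, y⁆) := by
    simp only [← Finset.sum_add_distrib, add_assoc]
  have himage (x y : L) : ω.tensorToEnd (∑ i, (⁅a i, y⁆ ⊗ₜ[F] b i + a i ⊗ₜ[F] ⁅b i, y⁆
        + ⁅b i, y⁆ ⊗ₜ[F] a i + b i ⊗ₜ[F] ⁅a i, y⁆)) x =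
      ⁅R x + Rstar x, y⁆ + (R ⁅y, x⁆ + Rstar ⁅y, x⁆) := by
    rw [hsplit, map_add, LinearMap.add_apply,
      LinearMap.BilinForm.tensorToEnd_sum_lie_tmul_add_tmul_lie hinv a b R hR,
      LinearMap.BilinForm.tensorToEnd_sum_lie_tmul_add_tmul_lie hinv b a Rstar hRstar, add_lie]
    abel
  have hcentroid := LieAlgebra.lie_apply_add_apply_lie_eq_zero_iff (R + Rstar)
  simp only [LinearMap.add_apply] at hcentroid
  rw [← hcentroid, forall_comm]
  refine forall_congr' fun y => ?_
  rw [← (LinearMap.BilinForm.tensorToEnd_injective hnd).eq_iff, map_zero, LinearMap.ext_iff]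
  simp only [himage, LinearMap.zero_apply]

theorem stmt_2
    (F : Type*) [Field F] [CharZero F]
    (L : Type*) [LieRing L] [LieAlgebra F L] [FiniteDimensional F L]
    (ω : LinearMap.BilinForm F L)
    (hnd : ω.Nondegenerate)
    (hsymm : ∀ x y : L, ω x y = ω y x)
    (hinv : ∀ x y z : L, ω ⁅x, y⁆ z = ω x ⁅y, z⁆)
    (ι : Type*) [Fintype ι] (a b : ι → L)
    (R Rstar : L →ₗ[F] L)
    (hR : ∀ x : L, R x = ∑ i, ω (b i) x • a i)
    (hadj : ∀ x y : L, ω (R x) y = ω x (Rstar y))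
    : (∀ y : L, ∑ i, (⁅a i, y⁆ ⊗ₜ[F] b i + a i ⊗ₜ[F] ⁅b i, y⁆
        + ⁅b i, y⁆ ⊗ₜ[F] a i + b i ⊗ₜ[F] ⁅a i, y⁆) = (0 : L ⊗[F] L))
      ↔ (∀ x y : L, ⁅R x + Rstar x, y⁆ = R ⁅x, y⁆ + Rstar ⁅x, y⁆) :=
  stmt_2_general F L ω hnd hsymm hinv ι a b R Rstar hR hadj
end

section
/- Suppose r is a solution of the classical Yang–Baxter equation on L. Then R is a Rota–Baxter operator of weight λ if and only if for all a, b ∈ L: R([R(a), b] + [R*(a), b] + λ[a, b]) = 0. -/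
open TensorProduct

/-!
Contracting the CYBE tensor `∑ [a_i, a_j] ⊗ b_i ⊗ b_j - a_i ⊗ [a_j, b_i] ⊗ b_j + a_i ⊗ a_j ⊗ [b_i, b_j]`
against `ω(·, x)` in the second slot and `ω(·, y)` in the third, invariance of `ω` identifies the
three resulting sums with `⁅R x, R y⁆`, `R ⁅x, R y⁆` and `R ⁅R* x, y⁆`. So the CYBE gives
`⁅R x, R y⁆ = R (⁅x, R y⁆ - ⁅R* x, y⁆)`, and substituting this into the Rota–Baxter identity
turns it into `R (⁅R x, y⁆ + ⁅R* x, y⁆ + λ ⁅x, y⁆) = 0`.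
-/

section RotaBaxter

variable {K L : Type*} [CommRing K] [LieRing L] [LieAlgebra K L]

theorem rotaBaxter_iff_of_lie_map_map_eq {R S : L →ₗ[K] L}
    (h : ∀ x y : L, ⁅R x, R y⁆ = R (⁅x, R y⁆ - ⁅S x, y⁆)) (lam : K) :
    (∀ x y : L, ⁅R x, R y⁆ = R (⁅R x, y⁆ + ⁅x, R y⁆ + lam • ⁅x, y⁆))
      ↔ ∀ x y : L, R (⁅R x, y⁆ + ⁅S x, y⁆ + lam • ⁅x, y⁆) = 0 := by
  refine forall₂_congr fun x y => ?_
  rw [h, eq_comm, ← sub_eq_zero, ← map_sub]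
  congr! 2
  abel

end RotaBaxter

section CYBE

variable {K L : Type*} [CommRing K] [LieRing L] [LieAlgebra K L] {ι : Type*} [Fintype ι]

def classicalYangBaxter (a b : ι → L) : L ⊗[K] (L ⊗[K] L) :=
  ∑ i, ∑ j, (⁅a i, a j⁆ ⊗ₜ[K] (b i ⊗ₜ[K] b j)
    - a i ⊗ₜ[K] (⁅a j, b i⁆ ⊗ₜ[K] b j)
    + a i ⊗ₜ[K] (a j ⊗ₜ[K] ⁅b i, b j⁆))

variable (ω : LinearMap.BilinForm K L)

def contractTail (x y : L) : L ⊗[K] (L ⊗[K] L) →ₗ[K] L :=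
  TensorProduct.rid K L ∘ₗ
    (TensorProduct.lift ((LinearMap.mul K K).compl₁₂ (ω.flip x) (ω.flip y))).lTensor L

@[simp]
theorem contractTail_tmul (x y t u v : L) :
    contractTail ω x y (t ⊗ₜ (u ⊗ₜ v)) = (ω u x * ω v y) • t := by
  simp [contractTail]

variable {ω} (a b : ι → L) {R S : L →ₗ[K] L}

theorem lie_map_map_eq_sum (hR : ∀ x, R x = ∑ i, ω (b i) x • a i) (x y : L) :
    ⁅R x, R y⁆ = ∑ i, ∑ j, (ω (b i) x * ω (b j) y) • ⁅a i, a j⁆ := by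
  rw [hR x, hR y, sum_lie]
  simp_rw [lie_sum, smul_lie, lie_smul, smul_smul]

theorem map_lie_map_eq_sum (hsymm : ∀ x y, ω x y = ω y x)
    (hinv : ∀ x y z, ω ⁅x, y⁆ z = ω x ⁅y, z⁆) (hR : ∀ x, R x = ∑ i, ω (b i) x • a i) (x y : L) :
    R ⁅x, R y⁆ = ∑ i, ∑ j, (ω ⁅a j, b i⁆ x * ω (b j) y) • a i := by
  have hcoeff (i j : ι) : ω (b i) ⁅x, a j⁆ = ω ⁅a j, b i⁆ x := by
    rw [← hinv, hsymm, ← hinv]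
  rw [hR ⁅x, R y⁆, hR y]
  simp_rw [lie_sum, lie_smul, map_sum, map_smul, smul_eq_mul, Finset.sum_smul, hcoeff, mul_comm]

theorem map_lie_adjoint_eq_sum (hinv : ∀ x y z, ω ⁅x, y⁆ z = ω x ⁅y, z⁆)
    (hR : ∀ x, R x = ∑ i, ω (b i) x • a i) (hadj : ∀ x y, ω (R x) y = ω x (S y)) (x y : L) :
    R ⁅S x, y⁆ = ∑ i, ∑ j, (ω (a j) x * ω ⁅b i, b j⁆ y) • a i := by
  have hskew (i j : ι) : ω (b j) ⁅b i, y⁆ = -ω ⁅b i, b j⁆ y := by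
    rw [← hinv, ← lie_skew, map_neg, LinearMap.neg_apply]
  -- once `S x` is moved to the last slot, adjointness trades it for `R`
  have hcoeff (i : ι) : ω (b i) ⁅S x, y⁆ = ∑ j, ω (a j) x * ω ⁅b i, b j⁆ y := by
    rw [← lie_skew, map_neg, ← hinv, ← hadj, hR, map_sum, LinearMap.sum_apply]
    simp_rw [map_smul, LinearMap.smul_apply, smul_eq_mul, hskew, neg_mul, Finset.sum_neg_distrib,
      neg_neg, mul_comm]
  rw [hR ⁅S x, y⁆]
  simp_rw [hcoeff, Finset.sum_smul]

theorem lie_map_map_eq_map_sub_of_classicalYangBaxter (hsymm : ∀ x y, ω x y = ω y x)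
    (hinv : ∀ x y z, ω ⁅x, y⁆ z = ω x ⁅y, z⁆) (hR : ∀ x, R x = ∑ i, ω (b i) x • a i)
    (hadj : ∀ x y, ω (R x) y = ω x (S y)) (hCYBE : classicalYangBaxter (K := K) a b = 0)
    (x y : L) :
    ⁅R x, R y⁆ = R (⁅x, R y⁆ - ⁅S x, y⁆) := by
  have h := congrArg (contractTail ω x y) hCYBE
  simp only [classicalYangBaxter, map_sum, map_sub, map_add, map_zero, contractTail_tmul] at h
  rw [map_sub, ← sub_eq_zero, lie_map_map_eq_sum a b hR, map_lie_map_eq_sum a b hsymm hinv hR,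
    map_lie_adjoint_eq_sum a b hinv hR hadj, ← h]
  simp only [Finset.sum_add_distrib, Finset.sum_sub_distrib]
  abel

end CYBE

theorem stmt_3_general
    (F : Type*) [Field F]
    (L : Type*) [LieRing L] [LieAlgebra F L]
    (ω : LinearMap.BilinForm F L)
    (hsymm : ∀ x y : L, ω x y = ω y x)
    (hinv : ∀ x y z : L, ω ⁅x, y⁆ z = ω x ⁅y, z⁆)
    (ι : Type*) [Fintype ι] (a b : ι → L)
    (R Rstar : L →ₗ[F] L)
    (hR : ∀ x : L, R x = ∑ i, ω (b i) x • a i)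
    (hadj : ∀ x y : L, ω (R x) y = ω x (Rstar y))
    (lam : F)
    (hCYBE : ∑ i, ∑ j, (⁅a i, a j⁆ ⊗ₜ[F] (b i ⊗ₜ[F] b j)
        - a i ⊗ₜ[F] (⁅a j, b i⁆ ⊗ₜ[F] b j)
        + a i ⊗ₜ[F] (a j ⊗ₜ[F] ⁅b i, b j⁆)) = (0 : L ⊗[F] (L ⊗[F] L))) :
    (∀ x y : L, ⁅R x, R y⁆ = R (⁅R x, y⁆ + ⁅x, R y⁆ + lam • ⁅x, y⁆))
      ↔ (∀ x y : L, R (⁅R x, y⁆ + ⁅Rstar x, y⁆ + lam • ⁅x, y⁆) = 0) :=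
  rotaBaxter_iff_of_lie_map_map_eq
    (lie_map_map_eq_map_sub_of_classicalYangBaxter a b hsymm hinv hR hadj hCYBE) lam

theorem stmt_3
    (F : Type*) [Field F] [CharZero F]
    (L : Type*) [LieRing L] [LieAlgebra F L] [FiniteDimensional F L]
    (ω : LinearMap.BilinForm F L)
    (hnd : ω.Nondegenerate)
    (hsymm : ∀ x y : L, ω x y = ω y x)
    (hinv : ∀ x y z : L, ω ⁅x, y⁆ z = ω x ⁅y, z⁆)
    (ι : Type*) [Fintype ι] (a b : ι → L)
    (R Rstar : L →ₗ[F] L)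
    (hR : ∀ x : L, R x = ∑ i, ω (b i) x • a i)
    (hadj : ∀ x y : L, ω (R x) y = ω x (Rstar y))
    (lam : F)
    (hCYBE : ∑ i, ∑ j, (⁅a i, a j⁆ ⊗ₜ[F] (b i ⊗ₜ[F] b j)
        - a i ⊗ₜ[F] (⁅a j, b i⁆ ⊗ₜ[F] b j)
        + a i ⊗ₜ[F] (a j ⊗ₜ[F] ⁅b i, b j⁆)) = (0 : L ⊗[F] (L ⊗[F] L))) :
    (∀ x y : L, ⁅R x, R y⁆ = R (⁅R x, y⁆ + ⁅x, R y⁆ + lam • ⁅x, y⁆))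
      ↔ (∀ x y : L, R (⁅R x, y⁆ + ⁅Rstar x, y⁆ + lam • ⁅x, y⁆) = 0) :=
  stmt_3_general F L ω hsymm hinv ι a b R Rstar hR hadj lam hCYBE
end

section
/- Suppose r is a solution of the classical Yang–Baxter equation on L. Then R* is a Rota–Baxter operator of weight λ if and only if for all a, b ∈ L: R*([R(a), b] + [R*(a), b] + λ[a, b]) = 0. -/
/-!
Write `R*` for the operator of the flipped tensor `∑ i, b i ⊗ a i`; it is the `ω`-adjoint of
`R` because `ω` is symmetric. Contracting the first two legs of the CYBE against `x` and `y`
and using invariance of `ω` turns its three terms into `R* ⁅x, R y⁆`, `R* ⁅R* x, y⁆` and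
`⁅R* x, R* y⁆`, so
`⁅R* x, R* y⁆ = R* ⁅R* x, y⁆ - R* ⁅x, R y⁆`.
Substituting this into the Rota–Baxter identity for `R*` at `(x, y)` leaves exactly
`R* (⁅R y, x⁆ + ⁅R* y, x⁆ + λ • ⁅y, x⁆) = 0`.
-/

open TensorProduct

section RotaBaxter

variable {K L : Type*} [CommRing K] [LieRing L] [LieAlgebra K L]

def IsRotaBaxter (T : L →ₗ[K] L) (lam : K) : Prop :=
  ∀ x y : L, ⁅T x, T y⁆ = T (⁅T x, y⁆ + ⁅x, T y⁆ + lam • ⁅x, y⁆)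

theorem rotaBaxter_apply_iff {R S : L →ₗ[K] L} {x y : L} (lam : K)
    (h : S ⁅x, R y⁆ - S ⁅S x, y⁆ + ⁅S x, S y⁆ = 0) :
    ⁅S x, S y⁆ = S (⁅S x, y⁆ + ⁅x, S y⁆ + lam • ⁅x, y⁆)
      ↔ S (⁅R y, x⁆ + ⁅S y, x⁆ + lam • ⁅y, x⁆) = 0 := by
  have hlie : ⁅S x, S y⁆ = S ⁅S x, y⁆ - S ⁅x, R y⁆ := by
    rw [← sub_eq_zero, ← h]
    abel
  rw [hlie, ← lie_skew (R y), ← lie_skew (S y), ← lie_skew y, smul_neg, ← neg_add, ← neg_add,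
    map_neg, neg_eq_zero]
  simp only [map_add, map_smul]
  rw [sub_eq_add_neg, add_assoc, add_assoc, add_right_inj, neg_eq_iff_add_eq_zero]

theorem isRotaBaxter_iff {R S : L →ₗ[K] L} (lam : K)
    (h : ∀ x y : L, S ⁅x, R y⁆ - S ⁅S x, y⁆ + ⁅S x, S y⁆ = 0) :
    IsRotaBaxter S lam ↔ ∀ x y : L, S (⁅R x, y⁆ + ⁅S x, y⁆ + lam • ⁅x, y⁆) = 0 := by
  rw [IsRotaBaxter, forall_comm]
  exact forall_congr' fun y => forall_congr' fun x => rotaBaxter_apply_iff lam (h x y)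

end RotaBaxter

section TensorOperator

variable {K L : Type*} [CommRing K] [LieRing L] [LieAlgebra K L]
  (ω : LinearMap.BilinForm K L) {ι : Type*} [Fintype ι] (a b : ι → L)

/-- The operator `R` of the tensor `r = ∑ i, a i ⊗ b i`. -/
def tensorOperator : L →ₗ[K] L := ∑ i, (ω (b i)).smulRight (a i)

@[simp]
theorem tensorOperator_apply (x : L) : tensorOperator ω a b x = ∑ i, ω (b i) x • a i := by
  simp [tensorOperator]

variable (K) in
def SatisfiesCYBE : Prop :=
  ∑ i, ∑ j, (⁅a i, a j⁆ ⊗ₜ[K] (b i ⊗ₜ[K] b j)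
    - a i ⊗ₜ[K] (⁅a j, b i⁆ ⊗ₜ[K] b j)
    + a i ⊗ₜ[K] (a j ⊗ₜ[K] ⁅b i, b j⁆)) = (0 : L ⊗[K] (L ⊗[K] L))

def contractFirstTwo (x y : L) : L ⊗[K] (L ⊗[K] L) →ₗ[K] L :=
  (TensorProduct.lid K L).toLinearMap ∘ₗ TensorProduct.map (ω x)
    ((TensorProduct.lid K L).toLinearMap ∘ₗ TensorProduct.map (ω y) LinearMap.id)

@[simp]
theorem contractFirstTwo_tmul (x y u v w : L) :
    contractFirstTwo ω x y (u ⊗ₜ (v ⊗ₜ w)) = ω x u • ω y v • w := by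
  simp [contractFirstTwo, smul_comm (ω y v)]

variable {ω}

theorem eq_tensorOperator_swap_of_adjoint (hω : ω.SeparatingLeft)
    (hsymm : ∀ x y : L, ω x y = ω y x) {S : L →ₗ[K] L}
    (hadj : ∀ x y : L, ω (tensorOperator ω a b x) y = ω x (S y)) :
    S = tensorOperator ω b a := by
  ext y
  rw [← sub_eq_zero]
  refine hω _ fun x => ?_
  rw [map_sub, LinearMap.sub_apply, sub_eq_zero, hsymm, ← hadj, hsymm]
  simp only [tensorOperator_apply, map_sum, map_smul, smul_eq_mul, LinearMap.sum_apply,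
    LinearMap.smul_apply]
  exact Finset.sum_congr rfl fun i _ => by rw [mul_comm, hsymm y (a i)]

theorem lie_tensorOperator_swap (hsymm : ∀ x y : L, ω x y = ω y x) (x y : L) :
    ⁅tensorOperator ω b a x, tensorOperator ω b a y⁆
      = ∑ i, ∑ j, ω x (a i) • ω y (a j) • ⁅b i, b j⁆ := by
  simp only [tensorOperator_apply, sum_lie_sum, smul_lie, lie_smul]
  refine Finset.sum_congr rfl fun i _ => Finset.sum_congr rfl fun j _ => ?_
  rw [smul_comm, hsymm x, hsymm y]

section Invariant

variable (hsymm : ∀ x y : L, ω x y = ω y x) (hinv : ∀ x y z : L, ω ⁅x, y⁆ z = ω x ⁅y, z⁆)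
include hsymm hinv

theorem tensorOperator_swap_lie_tensorOperator (x y : L) :
    tensorOperator ω b a ⁅x, tensorOperator ω a b y⁆
      = ∑ i, ∑ j, ω x ⁅a i, a j⁆ • ω y (b i) • b j := by
  simp only [tensorOperator_apply, lie_sum, lie_smul, map_sum, map_smul, Finset.smul_sum,
    smul_smul]
  refine Finset.sum_congr rfl fun i _ => Finset.sum_congr rfl fun j _ => ?_
  rw [hsymm (a j), hinv, hsymm (b i), mul_comm]

theorem tensorOperator_swap_lie_tensorOperator_swap (x y : L) :
    tensorOperator ω b a ⁅tensorOperator ω b a x, y⁆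
      = ∑ i, ∑ j, ω x (a i) • ω y ⁅a j, b i⁆ • b j := by
  simp only [tensorOperator_apply, sum_lie, smul_lie, map_sum, map_smul, Finset.smul_sum,
    smul_smul]
  refine Finset.sum_congr rfl fun i _ => Finset.sum_congr rfl fun j _ => ?_
  rw [← hinv, hsymm _ y, hsymm (a i)]

theorem SatisfiesCYBE.tensorOperator_swap_identity (hr : SatisfiesCYBE K a b) (x y : L) :
    tensorOperator ω b a ⁅x, tensorOperator ω a b y⁆
      - tensorOperator ω b a ⁅tensorOperator ω b a x, y⁆
      + ⁅tensorOperator ω b a x, tensorOperator ω b a y⁆ = 0 := by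
  have h := congrArg (contractFirstTwo ω x y) hr
  simp only [map_sum, map_add, map_sub, contractFirstTwo_tmul, map_zero, Finset.sum_add_distrib,
    Finset.sum_sub_distrib] at h
  rwa [tensorOperator_swap_lie_tensorOperator a b hsymm hinv,
    tensorOperator_swap_lie_tensorOperator_swap a b hsymm hinv,
    lie_tensorOperator_swap a b hsymm]

end Invariant

end TensorOperator

theorem stmt_5_general
    (F : Type*) [Field F]
    (L : Type*) [LieRing L] [LieAlgebra F L]
    (ω : LinearMap.BilinForm F L)
    (hnd : ω.Nondegenerate)
    (hsymm : ∀ x y : L, ω x y = ω y x)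
    (hinv : ∀ x y z : L, ω ⁅x, y⁆ z = ω x ⁅y, z⁆)
    (ι : Type*) [Fintype ι] (a b : ι → L)
    (R Rstar : L →ₗ[F] L)
    (hR : ∀ x : L, R x = ∑ i, ω (b i) x • a i)
    (hadj : ∀ x y : L, ω (R x) y = ω x (Rstar y))
    (lam : F)
    (hCYBE : ∑ i, ∑ j, (⁅a i, a j⁆ ⊗ₜ[F] (b i ⊗ₜ[F] b j)
        - a i ⊗ₜ[F] (⁅a j, b i⁆ ⊗ₜ[F] b j)
        + a i ⊗ₜ[F] (a j ⊗ₜ[F] ⁅b i, b j⁆)) = (0 : L ⊗[F] (L ⊗[F] L))) :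
    (∀ x y : L, ⁅Rstar x, Rstar y⁆ = Rstar (⁅Rstar x, y⁆ + ⁅x, Rstar y⁆ + lam • ⁅x, y⁆))
      ↔ (∀ x y : L, Rstar (⁅R x, y⁆ + ⁅Rstar x, y⁆ + lam • ⁅x, y⁆) = 0) := by
  obtain rfl : R = tensorOperator ω a b := LinearMap.ext fun x => by rw [hR, tensorOperator_apply]
  obtain rfl := eq_tensorOperator_swap_of_adjoint a b hnd.1 hsymm hadj
  exact isRotaBaxter_iff lam (SatisfiesCYBE.tensorOperator_swap_identity a b hsymm hinv hCYBE)

theorem stmt_5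
    (F : Type*) [Field F] [CharZero F]
    (L : Type*) [LieRing L] [LieAlgebra F L] [FiniteDimensional F L]
    (ω : LinearMap.BilinForm F L)
    (hnd : ω.Nondegenerate)
    (hsymm : ∀ x y : L, ω x y = ω y x)
    (hinv : ∀ x y z : L, ω ⁅x, y⁆ z = ω x ⁅y, z⁆)
    (ι : Type*) [Fintype ι] (a b : ι → L)
    (R Rstar : L →ₗ[F] L)
    (hR : ∀ x : L, R x = ∑ i, ω (b i) x • a i)
    (hadj : ∀ x y : L, ω (R x) y = ω x (Rstar y))
    (lam : F)
    (hCYBE : ∑ i, ∑ j, (⁅a i, a j⁆ ⊗ₜ[F] (b i ⊗ₜ[F] b j)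
        - a i ⊗ₜ[F] (⁅a j, b i⁆ ⊗ₜ[F] b j)
        + a i ⊗ₜ[F] (a j ⊗ₜ[F] ⁅b i, b j⁆)) = (0 : L ⊗[F] (L ⊗[F] L))) :
    (∀ x y : L, ⁅Rstar x, Rstar y⁆ = Rstar (⁅Rstar x, y⁆ + ⁅x, Rstar y⁆ + lam • ⁅x, y⁆))
      ↔ (∀ x y : L, Rstar (⁅R x, y⁆ + ⁅Rstar x, y⁆ + lam • ⁅x, y⁆) = 0) :=
  stmt_5_general F L ω hnd hsymm hinv ι a b R Rstar hR hadj lam hCYBE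
end

section
/- Suppose R is a Rota–Baxter operator of nonzero weight λ on L and for all a ∈ L the element R(a) + R*(a) + λa lies in the center Z(L) of L. Then r is a solution of the classical Yang–Baxter equation on L. -/
/-!
Pairing the CYBE tensor with `x ⊗ y ⊗ z` through `ω` gives
`ω([R y, R z], x) - ω([R z, R* x], y) + ω([R* x, R* y], z)`, and since `ω` is nondegenerate this
pairing detects the tensor. Centrality of `R + R* + λ` means that `R*` may be replaced by
`-(R + λ)` inside brackets, so by the Rota–Baxter identity `[R* x, R* y] = (R + λ) Z` with
`Z = [R x, y] + [x, R y] + λ [x, y]`. Moving `R + λ` across `ω` and using that brackets are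
`ω`-orthogonal to the center, the three terms cancel by cyclicity of `ω([·, ·], ·)`.
-/

open TensorProduct

namespace LinearMap.BilinForm

variable {F V : Type*} [CommRing F] [AddCommGroup V] [Module F V]

noncomputable def tripleTensorDual (ω : LinearMap.BilinForm F V) :
    V ⊗[F] (V ⊗[F] V) →ₗ[F] Module.Dual F (V ⊗[F] (V ⊗[F] V)) :=
  dualDistrib F V (V ⊗[F] V) ∘ₗ map ω (dualDistrib F V V ∘ₗ map ω ω)

@[simp]
theorem tripleTensorDual_tmul (ω : LinearMap.BilinForm F V) (p q s x y z : V) :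
    ω.tripleTensorDual (p ⊗ₜ (q ⊗ₜ s)) (x ⊗ₜ (y ⊗ₜ z)) = ω p x * (ω q y * ω s z) := by
  simp [tripleTensorDual, dualDistrib_apply]

theorem tripleTensorDual_injective {K : Type*} [Field K] [Module K V] [FiniteDimensional K V]
    {ω : LinearMap.BilinForm K V} (hω : ω.Nondegenerate) :
    Function.Injective ω.tripleTensorDual :=
  let e := ω.toDual hω
  ((TensorProduct.congr e ((TensorProduct.congr e e).trans (dualDistribEquiv K V V))).trans
    (dualDistribEquiv K V (V ⊗[K] V))).injective

theorem apply_eq_sum_of_adjoint {ι : Type*} [Fintype ι] {ω : LinearMap.BilinForm F V}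
    (hω : ω.Nondegenerate) (hsymm : ∀ x y, ω x y = ω y x) {a b : ι → V}
    {R Rstar : V →ₗ[F] V} (hR : ∀ x, R x = ∑ i, ω (b i) x • a i)
    (hadj : ∀ x y, ω (R x) y = ω x (Rstar y)) (y : V) :
    Rstar y = ∑ i, ω (a i) y • b i := by
  refine sub_eq_zero.mp (hω.2 _ fun x => ?_)
  rw [map_sub, ← hadj, hR, sub_eq_zero]
  simp only [map_sum, map_smul, LinearMap.sum_apply, LinearMap.smul_apply, smul_eq_mul, hsymm x,
    mul_comm]

variable {L : Type*} [LieRing L] [LieAlgebra F L]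

theorem apply_lie_mem_center {ω : LinearMap.BilinForm F L}
    (hinv : ∀ x y z : L, ω ⁅x, y⁆ z = ω x ⁅y, z⁆) (p q : L) {c : L}
    (hc : c ∈ LieAlgebra.center F L) : ω ⁅p, q⁆ c = 0 := by
  rw [hinv, (LieModule.mem_maxTrivSubmodule F L L c).mp hc, map_zero]

theorem tripleTensorDual_cybe_tmul {ι : Type*} [Fintype ι] (ω : LinearMap.BilinForm F L)
    {a b : ι → L} {R Rstar : L →ₗ[F] L} (hR : ∀ x, R x = ∑ i, ω (b i) x • a i)
    (hRstar : ∀ x, Rstar x = ∑ i, ω (a i) x • b i) (x y z : L) :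
    ω.tripleTensorDual (∑ i, ∑ j, (⁅a i, a j⁆ ⊗ₜ[F] (b i ⊗ₜ[F] b j)
        - a i ⊗ₜ[F] (⁅a j, b i⁆ ⊗ₜ[F] b j)
        + a i ⊗ₜ[F] (a j ⊗ₜ[F] ⁅b i, b j⁆))) (x ⊗ₜ (y ⊗ₜ z)) =
      ω ⁅R y, R z⁆ x - ω ⁅R z, Rstar x⁆ y + ω ⁅Rstar x, Rstar y⁆ z := by
  simp only [hR, hRstar, map_sum, map_add, map_sub, LinearMap.sum_apply, LinearMap.add_apply,
    LinearMap.sub_apply, tripleTensorDual_tmul, sum_lie_sum, smul_lie, lie_smul, map_smul,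
    LinearMap.smul_apply, smul_eq_mul, Finset.sum_add_distrib, Finset.sum_sub_distrib]
  congr 1
  congr 1
  · exact Finset.sum_congr rfl fun i _ => Finset.sum_congr rfl fun j _ => by ring
  · exact Finset.sum_comm.trans
      (Finset.sum_congr rfl fun i _ => Finset.sum_congr rfl fun j _ => by ring)
  · exact Finset.sum_congr rfl fun i _ => Finset.sum_congr rfl fun j _ => by ring

end LinearMap.BilinForm

namespace RotaBaxter

variable {F L : Type*} [CommRing F] [LieRing L] [LieAlgebra F L] {R Rstar : L →ₗ[F] L} {lam : F}

theorem lie_adjoint_left (hcen : ∀ x : L, R x + Rstar x + lam • x ∈ LieAlgebra.center F L)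
    (x u : L) : ⁅Rstar x, u⁆ = -⁅R x + lam • x, u⁆ := by
  have := (LieModule.mem_maxTrivSubmodule F L L _).mp (hcen x) u
  rw [← lie_skew, add_right_comm, neg_eq_zero, add_lie, add_eq_zero_iff_neg_eq] at this
  exact this.symm

theorem lie_adjoint_right (hcen : ∀ x : L, R x + Rstar x + lam • x ∈ LieAlgebra.center F L)
    (x u : L) : ⁅u, Rstar x⁆ = -⁅u, R x + lam • x⁆ := by
  rw [← lie_skew, lie_adjoint_left hcen, lie_skew]

theorem lie_adjoint_adjoint (hcen : ∀ x : L, R x + Rstar x + lam • x ∈ LieAlgebra.center F L)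
    (hRB : ∀ x y : L, ⁅R x, R y⁆ = R (⁅R x, y⁆ + ⁅x, R y⁆ + lam • ⁅x, y⁆)) (x y : L) :
    ⁅Rstar x, Rstar y⁆ =
      R (⁅R x, y⁆ + ⁅x, R y⁆ + lam • ⁅x, y⁆) + lam • (⁅R x, y⁆ + ⁅x, R y⁆ + lam • ⁅x, y⁆) := by
  rw [lie_adjoint_left hcen, lie_adjoint_right hcen, neg_neg, ← hRB]
  simp only [lie_add, add_lie, lie_smul, smul_lie, smul_add, smul_smul]
  abel

theorem cybe_pairing_eq_zero {ω : LinearMap.BilinForm F L} (hsymm : ∀ x y : L, ω x y = ω y x)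
    (hinv : ∀ x y z : L, ω ⁅x, y⁆ z = ω x ⁅y, z⁆) (hadj : ∀ x y : L, ω (R x) y = ω x (Rstar y))
    (hRB : ∀ x y : L, ⁅R x, R y⁆ = R (⁅R x, y⁆ + ⁅x, R y⁆ + lam • ⁅x, y⁆))
    (hcen : ∀ x : L, R x + Rstar x + lam • x ∈ LieAlgebra.center F L) (x y z : L) :
    ω ⁅R y, R z⁆ x - ω ⁅R z, Rstar x⁆ y + ω ⁅Rstar x, Rstar y⁆ z = 0 := by
  obtain ⟨Z, hZ⟩ : ∃ Z, Z = ⁅R x, y⁆ + ⁅x, R y⁆ + lam • ⁅x, y⁆ := ⟨_, rfl⟩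
  have hcyc : ∀ p q r : L, ω ⁅p, q⁆ r = ω ⁅q, r⁆ p := fun p q r => by rw [hinv, hsymm]
  have hZc : ω Z (R z) + ω Z (Rstar z) + lam * ω Z z = 0 := by
    have : ω Z (R z + Rstar z + lam • z) = 0 := by
      simp only [hZ, map_add ω, map_smul ω, LinearMap.add_apply, LinearMap.smul_apply,
        ω.apply_lie_mem_center hinv _ _ (hcen z), smul_zero, add_zero]
    simpa only [map_add, map_smul, smul_eq_mul] using this
  have hadjoint_lie : ω ⁅Rstar x, Rstar y⁆ z = -ω Z (R z) := by
    rw [lie_adjoint_adjoint hcen hRB, ← hZ, map_add ω, LinearMap.add_apply, hadj, map_smul ω,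
      LinearMap.smul_apply, smul_eq_mul]
    linear_combination hZc
  rw [hadjoint_lie, hZ, lie_adjoint_right hcen]
  simp only [lie_add, lie_smul, map_add, map_neg, map_smul, LinearMap.add_apply,
    LinearMap.neg_apply, LinearMap.smul_apply, smul_eq_mul]
  linear_combination hcyc (R z) (R x) y + hcyc (R y) (R z) x + hcyc (R z) x (R y) +
    lam * hcyc (R z) x y

end RotaBaxter

theorem stmt_6_general
    (F : Type*) [Field F]
    (L : Type*) [LieRing L] [LieAlgebra F L] [FiniteDimensional F L]
    (ω : LinearMap.BilinForm F L)
    (hnd : ω.Nondegenerate)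
    (hsymm : ∀ x y : L, ω x y = ω y x)
    (hinv : ∀ x y z : L, ω ⁅x, y⁆ z = ω x ⁅y, z⁆)
    (ι : Type*) [Fintype ι] (a b : ι → L)
    (R Rstar : L →ₗ[F] L)
    (hR : ∀ x : L, R x = ∑ i, ω (b i) x • a i)
    (hadj : ∀ x y : L, ω (R x) y = ω x (Rstar y))
    (lam : F)
    (hRB : ∀ x y : L, ⁅R x, R y⁆ = R (⁅R x, y⁆ + ⁅x, R y⁆ + lam • ⁅x, y⁆))
    (hcen : ∀ x : L, R x + Rstar x + lam • x ∈ LieAlgebra.center F L) :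
    ∑ i, ∑ j, (⁅a i, a j⁆ ⊗ₜ[F] (b i ⊗ₜ[F] b j)
        - a i ⊗ₜ[F] (⁅a j, b i⁆ ⊗ₜ[F] b j)
        + a i ⊗ₜ[F] (a j ⊗ₜ[F] ⁅b i, b j⁆)) = (0 : L ⊗[F] (L ⊗[F] L)) := by
  refine ω.tripleTensorDual_injective hnd (TensorProduct.ext_threefold' fun x y z => ?_)
  rw [map_zero, LinearMap.zero_apply,
    ω.tripleTensorDual_cybe_tmul hR (ω.apply_eq_sum_of_adjoint hnd hsymm hR hadj)]
  exact RotaBaxter.cybe_pairing_eq_zero hsymm hinv hadj hRB hcen x y z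

theorem stmt_6
    (F : Type*) [Field F] [CharZero F]
    (L : Type*) [LieRing L] [LieAlgebra F L] [FiniteDimensional F L]
    (ω : LinearMap.BilinForm F L)
    (hnd : ω.Nondegenerate)
    (hsymm : ∀ x y : L, ω x y = ω y x)
    (hinv : ∀ x y z : L, ω ⁅x, y⁆ z = ω x ⁅y, z⁆)
    (ι : Type*) [Fintype ι] (a b : ι → L)
    (R Rstar : L →ₗ[F] L)
    (hR : ∀ x : L, R x = ∑ i, ω (b i) x • a i)
    (hadj : ∀ x y : L, ω (R x) y = ω x (Rstar y))
    (lam : F) (hlam : lam ≠ 0)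
    (hRB : ∀ x y : L, ⁅R x, R y⁆ = R (⁅R x, y⁆ + ⁅x, R y⁆ + lam • ⁅x, y⁆))
    (hcen : ∀ x : L, R x + Rstar x + lam • x ∈ LieAlgebra.center F L) :
    ∑ i, ∑ j, (⁅a i, a j⁆ ⊗ₜ[F] (b i ⊗ₜ[F] b j)
        - a i ⊗ₜ[F] (⁅a j, b i⁆ ⊗ₜ[F] b j)
        + a i ⊗ₜ[F] (a j ⊗ₜ[F] ⁅b i, b j⁆)) = (0 : L ⊗[F] (L ⊗[F] L)) :=
  stmt_6_general F L ω hnd hsymm hinv ι a b R Rstar hR hadj lam hRB hcen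
end

section
/- Suppose r is a solution of the classical Yang–Baxter equation on L and r + τ(r) is L-invariant. Then for every λ ∈ F, the image I_λ = θ_λ([L, L]) of the commutator ideal [L, L] under θ_λ = R + R* + λ·id is a Lie ideal of L. -/
open TensorProduct

/-! Contracting the invariance of `r + τ(r)` against `ω` shows that `R + R*`, the operator of
`r + τ(r)`, commutes with every `ad y`. Hence `θ_λ` is an endomorphism of the adjoint
representation, and such an endomorphism maps Lie ideals to Lie ideals. -/

namespace LinearMap.BilinForm

variable {F M ι : Type*} [CommRing F] [AddCommGroup M] [Module F M] [Fintype ι]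

theorem adjoint_eq_sum_smul {ω : LinearMap.BilinForm F M} (hω : LinearMap.SeparatingLeft ω)
    (hsymm : ∀ x y : M, ω x y = ω y x) {a b : ι → M} {R Rstar : M →ₗ[F] M}
    (hR : ∀ x, R x = ∑ i, ω (b i) x • a i) (hadj : ∀ x y, ω (R x) y = ω x (Rstar y))
    (y : M) : Rstar y = ∑ i, ω (a i) y • b i := by
  rw [← sub_eq_zero]
  refine hω _ fun x => ?_
  rw [map_sub, LinearMap.sub_apply, sub_eq_zero, hsymm, ← hadj, hR]
  simp only [map_sum, map_smul, LinearMap.sum_apply, LinearMap.smul_apply, smul_eq_mul]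
  exact Finset.sum_congr rfl fun i _ => by rw [hsymm (b i) x, mul_comm]

end LinearMap.BilinForm

section

variable {F L ι : Type*} [CommRing F] [LieRing L] [LieAlgebra F L] [Fintype ι]

theorem sum_smul_lie_eq_lie_sum_smul {ω : LinearMap.BilinForm F L}
    (hinv : ∀ x y z : L, ω ⁅x, y⁆ z = ω x ⁅y, z⁆) {a b : ι → L}
    (hinvr : ∀ y : L, ∑ i, (⁅a i, y⁆ ⊗ₜ[F] b i + a i ⊗ₜ[F] ⁅b i, y⁆
        + ⁅b i, y⁆ ⊗ₜ[F] a i + b i ⊗ₜ[F] ⁅a i, y⁆) = (0 : L ⊗[F] L)) (x y : L) :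
    ∑ i, (ω (b i) ⁅y, x⁆ • a i + ω (a i) ⁅y, x⁆ • b i)
      = ⁅y, ∑ i, (ω (b i) x • a i + ω (a i) x • b i)⁆ := by
  -- contract with `u ⊗ v ↦ ω v x • u`
  have hcontr :=
    congrArg ((TensorProduct.rid F L).toLinearMap ∘ₗ (ω.flip x).lTensor L) (hinvr y)
  simp only [map_sum, map_add, map_zero, LinearMap.comp_apply, LinearEquiv.coe_coe,
    LinearMap.lTensor_tmul, LinearMap.BilinForm.flip_apply, TensorProduct.rid_tmul, hinv] at hcontr
  rw [lie_sum, ← sub_eq_zero, ← hcontr, ← Finset.sum_sub_distrib]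
  refine Finset.sum_congr rfl fun i _ => ?_
  rw [lie_add, lie_smul, lie_smul, ← lie_skew (a i), ← lie_skew (b i), smul_neg, smul_neg]
  abel

end

theorem stmt_7_general
    (F : Type*) [Field F]
    (L : Type*) [LieRing L] [LieAlgebra F L]
    (ω : LinearMap.BilinForm F L)
    (hnd : ω.Nondegenerate)
    (hsymm : ∀ x y : L, ω x y = ω y x)
    (hinv : ∀ x y z : L, ω ⁅x, y⁆ z = ω x ⁅y, z⁆)
    (ι : Type*) [Fintype ι] (a b : ι → L)
    (R Rstar : L →ₗ[F] L)
    (hR : ∀ x : L, R x = ∑ i, ω (b i) x • a i)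
    (hadj : ∀ x y : L, ω (R x) y = ω x (Rstar y))
    (hinvr : ∀ y : L, ∑ i, (⁅a i, y⁆ ⊗ₜ[F] b i + a i ⊗ₜ[F] ⁅b i, y⁆
        + ⁅b i, y⁆ ⊗ₜ[F] a i + b i ⊗ₜ[F] ⁅a i, y⁆) = (0 : L ⊗[F] L)) :
    ∀ lam : F, ∃ J : LieIdeal F L,
      J.toSubmodule = Submodule.map (R + Rstar + lam • LinearMap.id)
        (⁅(⊤ : LieIdeal F L), (⊤ : LieIdeal F L)⁆ : LieIdeal F L).toSubmodule := by
  intro lam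
  have hRstar := ω.adjoint_eq_sum_smul hnd.1 hsymm hR hadj
  have hR_add_Rstar_lie (y x : L) : (R + Rstar) ⁅y, x⁆ = ⁅y, (R + Rstar) x⁆ := by
    simp only [LinearMap.add_apply, hR, hRstar, ← Finset.sum_add_distrib]
    exact sum_smul_lie_eq_lie_sum_smul hinv hinvr x y
  let θ : L →ₗ⁅F,L⁆ L :=
    { toLinearMap := R + Rstar, map_lie' := hR_add_Rstar_lie _ _ } + lam • LieModuleHom.id
  exact ⟨LieSubmodule.map θ ⁅⊤, ⊤⁆, LieSubmodule.toSubmodule_map θ _⟩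

theorem stmt_7
    (F : Type*) [Field F] [CharZero F]
    (L : Type*) [LieRing L] [LieAlgebra F L] [FiniteDimensional F L]
    (ω : LinearMap.BilinForm F L)
    (hnd : ω.Nondegenerate)
    (hsymm : ∀ x y : L, ω x y = ω y x)
    (hinv : ∀ x y z : L, ω ⁅x, y⁆ z = ω x ⁅y, z⁆)
    (ι : Type*) [Fintype ι] (a b : ι → L)
    (R Rstar : L →ₗ[F] L)
    (hR : ∀ x : L, R x = ∑ i, ω (b i) x • a i)
    (hadj : ∀ x y : L, ω (R x) y = ω x (Rstar y))
    (hCYBE : ∑ i, ∑ j, (⁅a i, a j⁆ ⊗ₜ[F] (b i ⊗ₜ[F] b j)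
        - a i ⊗ₜ[F] (⁅a j, b i⁆ ⊗ₜ[F] b j)
        + a i ⊗ₜ[F] (a j ⊗ₜ[F] ⁅b i, b j⁆)) = (0 : L ⊗[F] (L ⊗[F] L)))
    (hinvr : ∀ y : L, ∑ i, (⁅a i, y⁆ ⊗ₜ[F] b i + a i ⊗ₜ[F] ⁅b i, y⁆
        + ⁅b i, y⁆ ⊗ₜ[F] a i + b i ⊗ₜ[F] ⁅a i, y⁆) = (0 : L ⊗[F] L)) :
    ∀ lam : F, ∃ J : LieIdeal F L,
      J.toSubmodule = Submodule.map (R + Rstar + lam • LinearMap.id)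
        (⁅(⊤ : LieIdeal F L), (⊤ : LieIdeal F L)⁆ : LieIdeal F L).toSubmodule :=
  stmt_7_general F L ω hnd hsymm hinv ι a b R Rstar hR hadj hinvr
end

section
/- Suppose r is a solution of the classical Yang–Baxter equation on L, r + τ(r) is L-invariant, and R is a Rota–Baxter operator of weight λ. Then there is a Lie ideal I of L with I ⊆ [L, L] and R(I) = 0, such that R*(I) ⊆ I, the induced maps R̄ and R̄* on the quotient L/I are Rota–Baxter operators of weight λ, and R̄(z) + R̄*(z) + λz = 0 for every z in the commutator ideal [L/I, L/I]. -/
open TensorProduct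

/-- The linear map induced on the quotient `L ⧸ I` by a linear map `T : L → L`
preserving the Lie ideal `I`. -/
def inducedQuotMap (F : Type*) [Field F] (L : Type*) [LieRing L] [LieAlgebra F L]
    (I : LieIdeal F L) (T : L →ₗ[F] L) (h : ∀ x ∈ I, T x ∈ I) :
    (L ⧸ I) →ₗ[F] (L ⧸ I) :=
  Submodule.mapQ I.toSubmodule I.toSubmodule T h

/-!
Invariance of `r + τ(r)` says exactly that `S = R + R* + λ·id` commutes with every `ad y`, and
contracting the classical Yang–Baxter equation against `ω` gives
`[R x, R y] = R [x, R y] - R [R* x, y]`; together with the Rota–Baxter identity this yields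
`R [S x, y] = 0`. Take `I = S([L, L])`: it is an ideal inside `[L, L]` annihilated by `R`, and
modulo `I` the map `S̄` has central image and kills brackets. Hence `R̄* = S̄ + (-R̄ - λ·id)`
differs from the Rota–Baxter operator `-R̄ - λ·id` by such a map, so is Rota–Baxter itself, and
`R̄ + R̄* + λ·id = S̄` vanishes on `[L/I, L/I]`.
-/

section RotaBaxter

variable {K L : Type*} [CommRing K] [LieRing L] [LieAlgebra K L]

theorem IsRotaBaxter.neg_sub_smul_id {T : L →ₗ[K] L} {lam : K} (hT : IsRotaBaxter T lam) :
    IsRotaBaxter (-T - lam • LinearMap.id) lam := by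
  intro x y
  have h := hT x y
  simp only [LinearMap.sub_apply, LinearMap.neg_apply, LinearMap.smul_apply, LinearMap.id_apply,
    map_add, map_smul, map_sub, map_neg, lie_sub, sub_lie, lie_neg, neg_lie, lie_smul,
    smul_lie] at h ⊢
  linear_combination (norm := module) h

theorem IsRotaBaxter.add_of_central {P S : L →ₗ[K] L} {lam : K} (hP : IsRotaBaxter P lam)
    (hS_central : ∀ x y : L, ⁅S x, y⁆ = 0) (hS_lie : ∀ x y : L, S ⁅x, y⁆ = 0) :
    IsRotaBaxter (S + P) lam := by
  intro x y
  have hSy : ∀ x y : L, ⁅x, S y⁆ = 0 := fun x y => by rw [← lie_skew, hS_central, neg_zero]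
  simp only [LinearMap.add_apply, add_lie, lie_add, hS_central, hSy, zero_add]
  rw [hP x y]
  simp only [map_add, map_smul, hS_lie, smul_zero, zero_add]

theorem IsRotaBaxter.apply_lie_add_add_smul_eq_zero {R Rstar : L →ₗ[K] L} {lam : K}
    (hRB : IsRotaBaxter R lam) (hcybe : ∀ x y : L, ⁅R x, R y⁆ = R ⁅x, R y⁆ - R ⁅Rstar x, y⁆)
    (x y : L) : R ⁅R x + Rstar x + lam • x, y⁆ = 0 := by
  have h := hRB x y
  rw [hcybe, map_add, map_add, map_smul] at h
  rw [add_lie, add_lie, smul_lie, map_add, map_add, map_smul]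
  linear_combination (norm := module) -h

end RotaBaxter

theorem LinearMap.map_eq_zero_of_mem_derived {K L M : Type*} [CommRing K] [LieRing L]
    [LieAlgebra K L] [AddCommGroup M] [Module K M] (f : L →ₗ[K] M)
    (hf : ∀ x y : L, f ⁅x, y⁆ = 0) {z : L}
    (hz : z ∈ ⁅(⊤ : LieIdeal K L), (⊤ : LieIdeal K L)⁆) : f z = 0 := by
  have hle : (⁅(⊤ : LieIdeal K L), (⊤ : LieIdeal K L)⁆ : LieIdeal K L).toSubmodule ≤
      LinearMap.ker f := by
    rw [LieSubmodule.lieIdeal_oper_eq_linear_span', Submodule.span_le]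
    rintro _ ⟨x, -, y, -, rfl⟩
    exact hf x y
  exact hle hz

section QuadraticLie

variable {K L : Type*} [CommRing K] [LieRing L] [LieAlgebra K L] (ω : LinearMap.BilinForm K L)
  {ι : Type*} [Fintype ι] (a b : ι → L) {R Rstar : L →ₗ[K] L}

theorem apply_eq_sum_of_isAdjoint (hnd : ω.Nondegenerate) (hsymm : ∀ x y : L, ω x y = ω y x)
    (hR : ∀ x : L, R x = ∑ i, ω (b i) x • a i) (hadj : ∀ x y : L, ω (R x) y = ω x (Rstar y))
    (x : L) : Rstar x = ∑ i, ω (a i) x • b i := by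
  rw [← sub_eq_zero]
  refine hnd.2 _ fun z => ?_
  rw [map_sub, ← hadj, hR, map_sum, map_sum]
  simp only [map_smul, LinearMap.smul_apply, smul_eq_mul, LinearMap.coe_sum, Finset.sum_apply]
  exact sub_eq_zero.2 (Finset.sum_congr rfl fun i _ => by rw [hsymm z (b i)]; ring)

theorem map_lie_of_invariant (hinv : ∀ x y z : L, ω ⁅x, y⁆ z = ω x ⁅y, z⁆)
    (hR : ∀ x : L, R x = ∑ i, ω (b i) x • a i) (hRs : ∀ x : L, Rstar x = ∑ i, ω (a i) x • b i)
    (hinvr : ∀ y : L, ∑ i, (⁅a i, y⁆ ⊗ₜ[K] b i + a i ⊗ₜ[K] ⁅b i, y⁆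
        + ⁅b i, y⁆ ⊗ₜ[K] a i + b i ⊗ₜ[K] ⁅a i, y⁆) = (0 : L ⊗[K] L)) (x y : L) :
    (R + Rstar) ⁅x, y⁆ = ⁅x, (R + Rstar) y⁆ := by
  -- contract with `u ⊗ v ↦ ω v y • u`
  have h := congrArg ((TensorProduct.rid K L).toLinearMap ∘ₗ (LinearMap.flip ω y).lTensor L)
    (hinvr x)
  simp only [map_sum, map_add, map_zero, LinearMap.coe_comp, Function.comp_apply,
    LinearMap.lTensor_tmul, LinearEquiv.coe_coe, TensorProduct.rid_tmul, LinearMap.flip_apply] at h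
  have key : ⁅R y, x⁆ + R ⁅x, y⁆ + ⁅Rstar y, x⁆ + Rstar ⁅x, y⁆ = 0 := by
    simpa only [hR, hRs, sum_lie, smul_lie, map_sum, map_smul, ← hinv, ← Finset.sum_add_distrib]
      using h
  rw [LinearMap.add_apply, LinearMap.add_apply, lie_add, ← lie_skew x (R y),
    ← lie_skew x (Rstar y)]
  linear_combination (norm := module) key

theorem lie_apply_apply_of_cybe (hsymm : ∀ x y : L, ω x y = ω y x)
    (hinv : ∀ x y z : L, ω ⁅x, y⁆ z = ω x ⁅y, z⁆)
    (hR : ∀ x : L, R x = ∑ i, ω (b i) x • a i) (hRs : ∀ x : L, Rstar x = ∑ i, ω (a i) x • b i)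
    (hCYBE : ∑ i, ∑ j, (⁅a i, a j⁆ ⊗ₜ[K] (b i ⊗ₜ[K] b j)
        - a i ⊗ₜ[K] (⁅a j, b i⁆ ⊗ₜ[K] b j)
        + a i ⊗ₜ[K] (a j ⊗ₜ[K] ⁅b i, b j⁆)) = (0 : L ⊗[K] (L ⊗[K] L))) (x y : L) :
    ⁅R x, R y⁆ = R ⁅x, R y⁆ - R ⁅Rstar x, y⁆ := by
  -- contract with `u ⊗ v ⊗ w ↦ (ω v x * ω w y) • u`
  have h := congrArg ((TensorProduct.rid K L).toLinearMap ∘ₗ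
      (LinearMap.mul' K K ∘ₗ TensorProduct.map (LinearMap.flip ω x) (LinearMap.flip ω y)).lTensor L)
    hCYBE
  simp only [map_sum, map_add, map_sub, map_zero, LinearMap.coe_comp, Function.comp_apply,
    LinearMap.lTensor_tmul, LinearEquiv.coe_coe, TensorProduct.rid_tmul, TensorProduct.map_tmul,
    LinearMap.mul'_apply, LinearMap.flip_apply] at h
  have hRR : ⁅R x, R y⁆ = ∑ i, ∑ j, (ω (b i) x * ω (b j) y) • ⁅a i, a j⁆ := by
    rw [hR x, hR y, sum_lie]
    refine Finset.sum_congr rfl fun i _ => ?_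
    rw [smul_lie, lie_sum, Finset.smul_sum]
    exact Finset.sum_congr rfl fun j _ => by rw [lie_smul, smul_smul]
  have hRlie : R ⁅x, R y⁆ = ∑ i, ∑ j, (ω ⁅a j, b i⁆ x * ω (b j) y) • a i := by
    rw [hR ⁅x, R y⁆]
    refine Finset.sum_congr rfl fun i _ => ?_
    rw [hR y, lie_sum, map_sum, Finset.sum_smul]
    refine Finset.sum_congr rfl fun j _ => ?_
    rw [lie_smul, map_smul, smul_eq_mul, ← hinv, hsymm ⁅b i, x⁆, ← hinv, mul_comm]
  have hRliestar : R ⁅Rstar x, y⁆ = ∑ i, ∑ j, (ω (a j) x * ω ⁅b i, b j⁆ y) • a i := by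
    rw [hR ⁅Rstar x, y⁆]
    refine Finset.sum_congr rfl fun i _ => ?_
    rw [hRs x, sum_lie, map_sum, Finset.sum_smul]
    exact Finset.sum_congr rfl fun j _ => by rw [smul_lie, map_smul, smul_eq_mul, hinv]
  rw [hRR, hRlie, hRliestar, ← sub_eq_zero, ← h]
  simp only [Finset.sum_sub_distrib, Finset.sum_add_distrib]
  abel

end QuadraticLie

namespace LieModuleHom

variable {K L : Type*} [CommRing K] [LieRing L] [LieAlgebra K L] (S : L →ₗ⁅K,L⁆ L)

theorem map_lie_left (x y : L) : S ⁅x, y⁆ = ⁅S x, y⁆ := by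
  rw [← lie_skew, map_neg, map_lie, lie_skew]

theorem map_lie_top_le :
    LieSubmodule.map S ⁅(⊤ : LieIdeal K L), ⊤⁆ ≤ ⁅(⊤ : LieIdeal K L), (⊤ : LieIdeal K L)⁆ := by
  rw [LieSubmodule.map_bracket_eq]
  exact LieSubmodule.mono_lie_right _ le_top

theorem apply_lie_mem_map (x y : L) :
    S ⁅x, y⁆ ∈ LieSubmodule.map S ⁅(⊤ : LieIdeal K L), ⊤⁆ :=
  LieSubmodule.mem_map_of_mem
    (LieSubmodule.lie_mem_lie (LieSubmodule.mem_top x) (LieSubmodule.mem_top y))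

theorem lie_apply_mem_map (x y : L) : ⁅S x, y⁆ ∈ LieSubmodule.map S ⁅(⊤ : LieIdeal K L), ⊤⁆ :=
  S.map_lie_left x y ▸ S.apply_lie_mem_map x y

theorem apply_mem_map_of_mem {z : L}
    (hz : z ∈ LieSubmodule.map S ⁅(⊤ : LieIdeal K L), ⊤⁆) :
    S z ∈ LieSubmodule.map S ⁅(⊤ : LieIdeal K L), ⊤⁆ :=
  LieSubmodule.mem_map_of_mem (S.map_lie_top_le hz)

theorem eq_zero_of_mem_map {R : L →ₗ[K] L} (hR : ∀ x y : L, R ⁅S x, y⁆ = 0) {z : L}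
    (hz : z ∈ LieSubmodule.map S ⁅(⊤ : LieIdeal K L), ⊤⁆) : R z = 0 := by
  obtain ⟨w, hw, rfl⟩ := (LieSubmodule.mem_map z).1 hz
  exact (R ∘ₗ (S : L →ₗ[K] L)).map_eq_zero_of_mem_derived
    (fun x y => by simpa only [LinearMap.comp_apply, LieModuleHom.coe_toLinearMap,
      S.map_lie_left] using hR x y) hw

end LieModuleHom

section Quotient

variable {F L : Type*} [Field F] [LieRing L] [LieAlgebra F L] {I : LieIdeal F L}

theorem IsRotaBaxter.quotient {T : L →ₗ[F] L} {lam : F} (hT : IsRotaBaxter T lam)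
    (h : ∀ x ∈ I, T x ∈ I) : IsRotaBaxter (inducedQuotMap F L I T h) lam := by
  intro x y
  obtain ⟨x, rfl⟩ := LieSubmodule.Quotient.surjective_mk' I x
  obtain ⟨y, rfl⟩ := LieSubmodule.Quotient.surjective_mk' I y
  exact congrArg LieSubmodule.Quotient.mk (hT x y)

variable {R Rstar : L →ₗ[F] L} {lam : F}

theorem lie_inducedQuotMap_add_add_smul_eq_zero (hRI : ∀ x ∈ I, R x ∈ I)
    (hRsI : ∀ x ∈ I, Rstar x ∈ I) (h : ∀ x y : L, ⁅R x + Rstar x + lam • x, y⁆ ∈ I)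
    (x y : L ⧸ I) :
    ⁅(inducedQuotMap F L I R hRI + inducedQuotMap F L I Rstar hRsI + lam • LinearMap.id :
      (L ⧸ I) →ₗ[F] L ⧸ I) x, y⁆ = 0 := by
  obtain ⟨x, rfl⟩ := LieSubmodule.Quotient.surjective_mk' I x
  obtain ⟨y, rfl⟩ := LieSubmodule.Quotient.surjective_mk' I y
  exact LieSubmodule.Quotient.mk_eq_zero'.2 (h x y)

theorem inducedQuotMap_add_add_smul_lie_eq_zero (hRI : ∀ x ∈ I, R x ∈ I)
    (hRsI : ∀ x ∈ I, Rstar x ∈ I) (h : ∀ x y : L, R ⁅x, y⁆ + Rstar ⁅x, y⁆ + lam • ⁅x, y⁆ ∈ I)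
    (x y : L ⧸ I) :
    (inducedQuotMap F L I R hRI + inducedQuotMap F L I Rstar hRsI + lam • LinearMap.id :
      (L ⧸ I) →ₗ[F] L ⧸ I) ⁅x, y⁆ = 0 := by
  obtain ⟨x, rfl⟩ := LieSubmodule.Quotient.surjective_mk' I x
  obtain ⟨y, rfl⟩ := LieSubmodule.Quotient.surjective_mk' I y
  exact LieSubmodule.Quotient.mk_eq_zero'.2 (h x y)

theorem IsRotaBaxter.quotient_of_add_add_smul_mem (hRB : IsRotaBaxter R lam)
    (hRI : ∀ x ∈ I, R x ∈ I) (hRsI : ∀ x ∈ I, Rstar x ∈ I)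
    (h_central : ∀ x y : L, ⁅R x + Rstar x + lam • x, y⁆ ∈ I)
    (h_lie : ∀ x y : L, R ⁅x, y⁆ + Rstar ⁅x, y⁆ + lam • ⁅x, y⁆ ∈ I) :
    IsRotaBaxter (inducedQuotMap F L I Rstar hRsI) lam := by
  have h := (hRB.quotient hRI).neg_sub_smul_id.add_of_central
    (lie_inducedQuotMap_add_add_smul_eq_zero hRI hRsI h_central)
    (inducedQuotMap_add_add_smul_lie_eq_zero hRI hRsI h_lie)
  convert h using 1
  abel

end Quotient

theorem stmt_10_general
    (F : Type*) [Field F]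
    (L : Type*) [LieRing L] [LieAlgebra F L]
    (ω : LinearMap.BilinForm F L)
    (hnd : ω.Nondegenerate)
    (hsymm : ∀ x y : L, ω x y = ω y x)
    (hinv : ∀ x y z : L, ω ⁅x, y⁆ z = ω x ⁅y, z⁆)
    (ι : Type*) [Fintype ι] (a b : ι → L)
    (R Rstar : L →ₗ[F] L)
    (hR : ∀ x : L, R x = ∑ i, ω (b i) x • a i)
    (hadj : ∀ x y : L, ω (R x) y = ω x (Rstar y))
    (hCYBE : ∑ i, ∑ j, (⁅a i, a j⁆ ⊗ₜ[F] (b i ⊗ₜ[F] b j)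
        - a i ⊗ₜ[F] (⁅a j, b i⁆ ⊗ₜ[F] b j)
        + a i ⊗ₜ[F] (a j ⊗ₜ[F] ⁅b i, b j⁆)) = (0 : L ⊗[F] (L ⊗[F] L)))
    (hinvr : ∀ y : L, ∑ i, (⁅a i, y⁆ ⊗ₜ[F] b i + a i ⊗ₜ[F] ⁅b i, y⁆
        + ⁅b i, y⁆ ⊗ₜ[F] a i + b i ⊗ₜ[F] ⁅a i, y⁆) = (0 : L ⊗[F] L))
    (lam : F)
    (hRB : ∀ x y : L, ⁅R x, R y⁆ = R (⁅R x, y⁆ + ⁅x, R y⁆ + lam • ⁅x, y⁆)) :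
    ∃ I : LieIdeal F L,
      I ≤ ⁅(⊤ : LieIdeal F L), (⊤ : LieIdeal F L)⁆ ∧
      (∀ x ∈ I, R x = 0) ∧
      ∃ (hRI : ∀ x ∈ I, R x ∈ I) (hRsI : ∀ x ∈ I, Rstar x ∈ I),
        (∀ x y : L ⧸ I,
          ⁅inducedQuotMap F L I R hRI x, inducedQuotMap F L I R hRI y⁆ =
          inducedQuotMap F L I R hRI
            (⁅inducedQuotMap F L I R hRI x, y⁆ + ⁅x, inducedQuotMap F L I R hRI y⁆
              + lam • ⁅x, y⁆)) ∧
        (∀ x y : L ⧸ I,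
          ⁅inducedQuotMap F L I Rstar hRsI x, inducedQuotMap F L I Rstar hRsI y⁆ =
          inducedQuotMap F L I Rstar hRsI
            (⁅inducedQuotMap F L I Rstar hRsI x, y⁆ + ⁅x, inducedQuotMap F L I Rstar hRsI y⁆
              + lam • ⁅x, y⁆)) ∧
        (∀ z ∈ (⁅(⊤ : LieIdeal F (L ⧸ I)), (⊤ : LieIdeal F (L ⧸ I))⁆ : LieIdeal F (L ⧸ I)),
          inducedQuotMap F L I R hRI z + inducedQuotMap F L I Rstar hRsI z + lam • z = 0) := by
  have hRB : IsRotaBaxter R lam := hRB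
  have hRs := apply_eq_sum_of_isAdjoint ω a b hnd hsymm hR hadj
  let S : L →ₗ⁅F,L⁆ L :=
    { R + Rstar + lam • LinearMap.id with
      map_lie' := fun {x y} => by
        have h := map_lie_of_invariant ω a b hinv hR hRs hinvr x y
        change R ⁅x, y⁆ + Rstar ⁅x, y⁆ + lam • ⁅x, y⁆ = ⁅x, R y + Rstar y + lam • y⁆
        rw [LinearMap.add_apply, LinearMap.add_apply] at h
        rw [lie_add, lie_smul, ← h] }
  have hRS : ∀ x y : L, R ⁅S x, y⁆ = 0 :=
    hRB.apply_lie_add_add_smul_eq_zero (lie_apply_apply_of_cybe ω a b hsymm hinv hR hRs hCYBE)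
  set I := LieSubmodule.map S ⁅(⊤ : LieIdeal F L), ⊤⁆
  have hR0 : ∀ x ∈ I, R x = 0 := fun x hx => S.eq_zero_of_mem_map hRS hx
  have hRI : ∀ x ∈ I, R x ∈ I := fun x hx => (hR0 x hx) ▸ I.zero_mem
  have hRsI : ∀ x ∈ I, Rstar x ∈ I := fun x hx => by
    have hRsx : Rstar x = S x - lam • x := by simp [S, hR0 x hx]
    rw [hRsx]
    exact sub_mem (S.apply_mem_map_of_mem hx) (I.smul_mem lam hx)
  refine ⟨I, S.map_lie_top_le, hR0, hRI, hRsI, hRB.quotient hRI,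
    hRB.quotient_of_add_add_smul_mem hRI hRsI S.lie_apply_mem_map S.apply_lie_mem_map,
    fun z hz => ?_⟩
  simpa only [LinearMap.add_apply, LinearMap.smul_apply, LinearMap.id_apply] using
    LinearMap.map_eq_zero_of_mem_derived _
    (inducedQuotMap_add_add_smul_lie_eq_zero hRI hRsI S.apply_lie_mem_map) hz

theorem stmt_10
    (F : Type*) [Field F] [CharZero F]
    (L : Type*) [LieRing L] [LieAlgebra F L] [FiniteDimensional F L]
    (ω : LinearMap.BilinForm F L)
    (hnd : ω.Nondegenerate)
    (hsymm : ∀ x y : L, ω x y = ω y x)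
    (hinv : ∀ x y z : L, ω ⁅x, y⁆ z = ω x ⁅y, z⁆)
    (ι : Type*) [Fintype ι] (a b : ι → L)
    (R Rstar : L →ₗ[F] L)
    (hR : ∀ x : L, R x = ∑ i, ω (b i) x • a i)
    (hadj : ∀ x y : L, ω (R x) y = ω x (Rstar y))
    (hCYBE : ∑ i, ∑ j, (⁅a i, a j⁆ ⊗ₜ[F] (b i ⊗ₜ[F] b j)
        - a i ⊗ₜ[F] (⁅a j, b i⁆ ⊗ₜ[F] b j)
        + a i ⊗ₜ[F] (a j ⊗ₜ[F] ⁅b i, b j⁆)) = (0 : L ⊗[F] (L ⊗[F] L)))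
    (hinvr : ∀ y : L, ∑ i, (⁅a i, y⁆ ⊗ₜ[F] b i + a i ⊗ₜ[F] ⁅b i, y⁆
        + ⁅b i, y⁆ ⊗ₜ[F] a i + b i ⊗ₜ[F] ⁅a i, y⁆) = (0 : L ⊗[F] L))
    (lam : F)
    (hRB : ∀ x y : L, ⁅R x, R y⁆ = R (⁅R x, y⁆ + ⁅x, R y⁆ + lam • ⁅x, y⁆)) :
    ∃ I : LieIdeal F L,
      I ≤ ⁅(⊤ : LieIdeal F L), (⊤ : LieIdeal F L)⁆ ∧
      (∀ x ∈ I, R x = 0) ∧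
      ∃ (hRI : ∀ x ∈ I, R x ∈ I) (hRsI : ∀ x ∈ I, Rstar x ∈ I),
        (∀ x y : L ⧸ I,
          ⁅inducedQuotMap F L I R hRI x, inducedQuotMap F L I R hRI y⁆ =
          inducedQuotMap F L I R hRI
            (⁅inducedQuotMap F L I R hRI x, y⁆ + ⁅x, inducedQuotMap F L I R hRI y⁆
              + lam • ⁅x, y⁆)) ∧
        (∀ x y : L ⧸ I,
          ⁅inducedQuotMap F L I Rstar hRsI x, inducedQuotMap F L I Rstar hRsI y⁆ =
          inducedQuotMap F L I Rstar hRsI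
            (⁅inducedQuotMap F L I Rstar hRsI x, y⁆ + ⁅x, inducedQuotMap F L I Rstar hRsI y⁆
              + lam • ⁅x, y⁆)) ∧
        (∀ z ∈ (⁅(⊤ : LieIdeal F (L ⧸ I)), (⊤ : LieIdeal F (L ⧸ I))⁆ : LieIdeal F (L ⧸ I)),
          inducedQuotMap F L I R hRI z + inducedQuotMap F L I Rstar hRsI z + lam • z = 0) :=
  stmt_10_general F L ω hnd hsymm hinv ι a b R Rstar hR hadj hCYBE hinvr lam hRB
end

section
/- Suppose R is a Rota–Baxter operator of weight λ on L such that R([a,b]) + R*([a,b]) = [R(a), b] + [R*(a), b] for all a, b ∈ L, and suppose there is a Lie ideal I of L with I ⊆ [L, L], R(I) = 0 and R*(I) ⊆ I, such that the induced map R̄ on the quotient L/I is a Rota–Baxter operator of weight λ and R̄(z) + R̄*(z) + λz = 0 for every z in the commutator ideal [L/I, L/I]. Then r is a solution of the classical Yang–Baxter equation and r + τ(r) is L-invariant. -/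
open TensorProduct

/-!
Since `ω` identifies `L` with its dual, a tensor vanishes as soon as all its contractions
with `ω u` in the first factor do. Contracting turns both tensors into operator expressions in
`R` and its adjoint `R* x = ∑ ω (a i) x • b i`: the CYBE becomes
`R* ⁅u, R v⁆ - R* ⁅R* u, v⁆ + ⁅R* u, R* v⁆ = 0`, and the invariance of `r + τ(r)` becomes the
hypothesis `R ⁅u, y⁆ + R* ⁅u, y⁆ = ⁅R u, y⁆ + ⁅R* u, y⁆`. Using the latter to move `R*` across
brackets, the former reduces to the Rota–Baxter identity together with
`R (R z + R* z + λ z) = 0` for `z ∈ [L, L]`, which holds because the hypothesis on `L ⧸ I`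
puts `R z + R* z + λ z` in `I`.
-/

theorem TensorProduct.eq_zero_of_forall_lid_rTensor_eq_zero {R M N : Type*} [CommRing R]
    [AddCommGroup M] [Module R M] [Module.Free R M] [AddCommGroup N] [Module R N]
    (x : M ⊗[R] N) (h : ∀ φ : Module.Dual R M, TensorProduct.lid R N (φ.rTensor N x) = 0) :
    x = 0 := by
  let ℬ := Module.Free.chooseBasis R M
  apply (equivFinsuppOfBasisLeft ℬ).injective
  ext i
  simp [equivFinsuppOfBasisLeft_apply, h]

namespace LinearMap.BilinForm.Nondegenerate

variable {K V : Type*} [Field K] [AddCommGroup V] [Module K V] {ω : LinearMap.BilinForm K V}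

theorem eq_zero_of_forall_lid_rTensor_eq_zero [FiniteDimensional K V] {N : Type*}
    [AddCommGroup N] [Module K N] (hω : ω.Nondegenerate) (x : V ⊗[K] N)
    (h : ∀ u, TensorProduct.lid K N ((ω u).rTensor N x) = 0) : x = 0 := by
  refine TensorProduct.eq_zero_of_forall_lid_rTensor_eq_zero x fun φ => ?_
  have hφ : ω ((ω.toDual hω).symm φ) = φ := LinearMap.ext fun v => by simp
  simpa [hφ] using h ((ω.toDual hω).symm φ)

theorem adjoint_apply_eq_sum {ι : Type*} [Fintype ι] (hω : ω.Nondegenerate)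
    (hsymm : ∀ x y, ω x y = ω y x) {a b : ι → V} {R S : V →ₗ[K] V}
    (hR : ∀ x, R x = ∑ i, ω (b i) x • a i) (hadj : ∀ x y, ω (R x) y = ω x (S y)) (y : V) :
    S y = ∑ i, ω (a i) y • b i := by
  refine sub_eq_zero.mp (hω.2 _ fun x => ?_)
  simp only [map_sub, map_sum, map_smul, smul_eq_mul, ← hadj, hR, LinearMap.sum_apply,
    LinearMap.smul_apply]
  simp only [hsymm x, mul_comm, sub_self]

end LinearMap.BilinForm.Nondegenerate

section QuadraticLieAlgebra

variable {F L ι : Type*} [CommRing F] [LieRing L] [LieAlgebra F L] [Fintype ι]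
  {ω : LinearMap.BilinForm F L} {a b : ι → L}

theorem apply_lie_eq_apply_lie (hinv : ∀ x y z : L, ω ⁅x, y⁆ z = ω x ⁅y, z⁆) (u x y : L) :
    ω u ⁅x, y⁆ = ω x ⁅y, u⁆ := by
  rw [← hinv, ← lie_skew, map_neg, LinearMap.neg_apply, hinv, ← map_neg, lie_skew]

theorem sum_apply_smul_map (hsymm : ∀ x y : L, ω x y = ω y x) {T : L →ₗ[F] L}
    (hT : ∀ x, T x = ∑ i, ω (a i) x • b i) {M : Type*} [AddCommGroup M] [Module F M]
    (f : L →ₗ[F] M) (u : L) : ∑ i, ω u (a i) • f (b i) = f (T u) := by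
  simp [hT, hsymm u]

theorem sum_apply_smul_lie (hsymm : ∀ x y : L, ω x y = ω y x) {T : L →ₗ[F] L}
    (hT : ∀ x, T x = ∑ i, ω (a i) x • b i) (u y : L) :
    ∑ i, ω u (a i) • ⁅b i, y⁆ = ⁅T u, y⁆ := by
  simpa using sum_apply_smul_map hsymm hT
    ((LieModule.toEnd F L L : L →ₗ[F] Module.End F L).flip y) u

theorem sum_apply_smul_lie' (hsymm : ∀ x y : L, ω x y = ω y x) {T : L →ₗ[F] L}
    (hT : ∀ x, T x = ∑ i, ω (a i) x • b i) (u y : L) :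
    ∑ i, ω u (a i) • ⁅y, b i⁆ = ⁅y, T u⁆ := by
  simpa using sum_apply_smul_map hsymm hT (LieAlgebra.ad F L y) u

theorem sum_apply_lie_smul (hinv : ∀ x y z : L, ω ⁅x, y⁆ z = ω x ⁅y, z⁆) {T : L →ₗ[F] L}
    (hT : ∀ x, T x = ∑ i, ω (a i) x • b i) (u y : L) :
    ∑ i, ω u ⁅a i, y⁆ • b i = -T ⁅u, y⁆ := by
  simp only [apply_lie_eq_apply_lie hinv u, ← hT, ← lie_skew u y, map_neg, neg_neg]

variable {R S : L →ₗ[F] L}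

theorem lid_rTensor_lid_rTensor_cybe (hsymm : ∀ x y : L, ω x y = ω y x)
    (hinv : ∀ x y z : L, ω ⁅x, y⁆ z = ω x ⁅y, z⁆) (hR : ∀ x, R x = ∑ i, ω (b i) x • a i)
    (hS : ∀ x, S x = ∑ i, ω (a i) x • b i) (u v : L) :
    TensorProduct.lid F L ((ω v).rTensor L (TensorProduct.lid F (L ⊗[F] L) ((ω u).rTensor _
      (∑ i, ∑ j, (⁅a i, a j⁆ ⊗ₜ[F] (b i ⊗ₜ[F] b j) - a i ⊗ₜ[F] (⁅a j, b i⁆ ⊗ₜ[F] b j)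
        + a i ⊗ₜ[F] (a j ⊗ₜ[F] ⁅b i, b j⁆)))))) =
      S ⁅u, R v⁆ - S ⁅S u, v⁆ + ⁅S u, S v⁆ := by
  have h₁ (i : ι) : ∑ j, ω u ⁅a i, a j⁆ • ω v (b i) • b j = ω v (b i) • S ⁅u, a i⁆ := by
    simp only [hS, Finset.smul_sum, apply_lie_eq_apply_lie hinv u,
      apply_lie_eq_apply_lie hinv (a i)]
    exact Finset.sum_congr rfl fun j _ => smul_comm _ _ _
  have h₂ (i : ι) : ∑ j, ω u (a i) • ω v ⁅a j, b i⁆ • b j = ω u (a i) • S ⁅b i, v⁆ := by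
    simp only [hS, Finset.smul_sum, apply_lie_eq_apply_lie hinv v]
  have h₃ (i : ι) : ∑ j, ω u (a i) • ω v (a j) • ⁅b i, b j⁆ = ω u (a i) • ⁅b i, S v⁆ := by
    rw [← sum_apply_smul_lie' hsymm hS, Finset.smul_sum]
  simp only [map_sum, map_add, map_sub, LinearMap.rTensor_tmul, TensorProduct.lid_tmul,
    map_smul, Finset.sum_add_distrib, Finset.sum_sub_distrib, h₁, h₂, h₃]
  simp only [← map_smul, ← map_sum, sum_apply_smul_lie hsymm hS, sum_apply_smul_lie' hsymm hR]

theorem lid_rTensor_invariance (hsymm : ∀ x y : L, ω x y = ω y x)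
    (hinv : ∀ x y z : L, ω ⁅x, y⁆ z = ω x ⁅y, z⁆) (hR : ∀ x, R x = ∑ i, ω (b i) x • a i)
    (hS : ∀ x, S x = ∑ i, ω (a i) x • b i) (u y : L) :
    TensorProduct.lid F L ((ω u).rTensor L (∑ i, (⁅a i, y⁆ ⊗ₜ[F] b i + a i ⊗ₜ[F] ⁅b i, y⁆
        + ⁅b i, y⁆ ⊗ₜ[F] a i + b i ⊗ₜ[F] ⁅a i, y⁆))) =
      ⁅R u, y⁆ + ⁅S u, y⁆ - (R ⁅u, y⁆ + S ⁅u, y⁆) := by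
  simp only [map_sum, map_add, LinearMap.rTensor_tmul, TensorProduct.lid_tmul,
    Finset.sum_add_distrib, sum_apply_lie_smul hinv hS, sum_apply_lie_smul hinv hR,
    sum_apply_smul_lie hsymm hS, sum_apply_smul_lie hsymm hR]
  abel

end QuadraticLieAlgebra

theorem apply_lie_sub_apply_lie_add_lie_eq_zero {F L : Type*} [CommRing F] [LieRing L]
    [LieAlgebra F L] {R S : L →ₗ[F] L} {lam : F}
    (hRB : ∀ x y : L, ⁅R x, R y⁆ = R (⁅R x, y⁆ + ⁅x, R y⁆ + lam • ⁅x, y⁆))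
    (hcentroid : ∀ x y : L, R ⁅x, y⁆ + S ⁅x, y⁆ = ⁅R x, y⁆ + ⁅S x, y⁆)
    (hker : ∀ x y : L, R (R ⁅x, y⁆ + S ⁅x, y⁆ + lam • ⁅x, y⁆) = 0) (x y : L) :
    S ⁅x, R y⁆ - S ⁅S x, y⁆ + ⁅S x, S y⁆ = 0 := by
  have hleft (x y : L) : ⁅S x, y⁆ = R ⁅x, y⁆ + S ⁅x, y⁆ - ⁅R x, y⁆ := by
    rw [hcentroid, add_sub_cancel_left]
  have hright (x y : L) : ⁅x, S y⁆ = R ⁅x, y⁆ + S ⁅x, y⁆ - ⁅x, R y⁆ := by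
    rw [← lie_skew, hleft, ← lie_skew y x, ← lie_skew x (R y)]
    simp only [map_neg]
    abel
  have hk := hker x y
  have hb := hRB x y
  rw [hleft x (S y), hright x y, hright (R x) y, hleft x y]
  simp only [map_add, map_sub, map_smul] at hk hb ⊢
  rw [hb, ← hk]
  abel

theorem inducedQuotMap_mk {F L : Type*} [Field F] [LieRing L] [LieAlgebra F L]
    {I : LieIdeal F L} {T : L →ₗ[F] L} (h : ∀ x ∈ I, T x ∈ I) (x : L) :
    inducedQuotMap F L I T h (LieSubmodule.Quotient.mk x) = LieSubmodule.Quotient.mk (T x) :=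
  rfl

theorem add_add_smul_lie_mem_of_inducedQuotMap {F L : Type*} [Field F] [LieRing L]
    [LieAlgebra F L] {I : LieIdeal F L} {R S : L →ₗ[F] L} {hRI : ∀ x ∈ I, R x ∈ I}
    {hSI : ∀ x ∈ I, S x ∈ I} {lam : F}
    (h : ∀ z ∈ (⁅(⊤ : LieIdeal F (L ⧸ I)), (⊤ : LieIdeal F (L ⧸ I))⁆ : LieIdeal F (L ⧸ I)),
      inducedQuotMap F L I R hRI z + inducedQuotMap F L I S hSI z + lam • z = 0) (x y : L) :
    R ⁅x, y⁆ + S ⁅x, y⁆ + lam • ⁅x, y⁆ ∈ I := by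
  have hmem : (LieSubmodule.Quotient.mk ⁅x, y⁆ : L ⧸ I) ∈
      (⁅(⊤ : LieIdeal F (L ⧸ I)), (⊤ : LieIdeal F (L ⧸ I))⁆ : LieIdeal F (L ⧸ I)) := by
    rw [LieSubmodule.Quotient.mk_bracket]
    exact LieSubmodule.lie_mem_lie (LieSubmodule.mem_top _) (LieSubmodule.mem_top _)
  have h' := h _ hmem
  rw [inducedQuotMap_mk, inducedQuotMap_mk] at h'
  rw [← LieSubmodule.Quotient.mk_eq_zero']
  simpa using h'

theorem stmt_11_general
    (F : Type*) [Field F]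
    (L : Type*) [LieRing L] [LieAlgebra F L] [FiniteDimensional F L]
    (ω : LinearMap.BilinForm F L)
    (hnd : ω.Nondegenerate)
    (hsymm : ∀ x y : L, ω x y = ω y x)
    (hinv : ∀ x y z : L, ω ⁅x, y⁆ z = ω x ⁅y, z⁆)
    (ι : Type*) [Fintype ι] (a b : ι → L)
    (R Rstar : L →ₗ[F] L)
    (hR : ∀ x : L, R x = ∑ i, ω (b i) x • a i)
    (hadj : ∀ x y : L, ω (R x) y = ω x (Rstar y))
    (lam : F)
    (hRB : ∀ x y : L, ⁅R x, R y⁆ = R (⁅R x, y⁆ + ⁅x, R y⁆ + lam • ⁅x, y⁆))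
    (hcentroid : ∀ x y : L, R ⁅x, y⁆ + Rstar ⁅x, y⁆ = ⁅R x, y⁆ + ⁅Rstar x, y⁆)
    (I : LieIdeal F L)
    (hR0 : ∀ x ∈ I, R x = 0)
    (hRI : ∀ x ∈ I, R x ∈ I)
    (hRsI : ∀ x ∈ I, Rstar x ∈ I)
    (hth : ∀ z ∈ (⁅(⊤ : LieIdeal F (L ⧸ I)), (⊤ : LieIdeal F (L ⧸ I))⁆ : LieIdeal F (L ⧸ I)),
      inducedQuotMap F L I R hRI z + inducedQuotMap F L I Rstar hRsI z + lam • z = 0) :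
    (∑ i, ∑ j, (⁅a i, a j⁆ ⊗ₜ[F] (b i ⊗ₜ[F] b j)
        - a i ⊗ₜ[F] (⁅a j, b i⁆ ⊗ₜ[F] b j)
        + a i ⊗ₜ[F] (a j ⊗ₜ[F] ⁅b i, b j⁆)) = (0 : L ⊗[F] (L ⊗[F] L))) ∧
    (∀ y : L, ∑ i, (⁅a i, y⁆ ⊗ₜ[F] b i + a i ⊗ₜ[F] ⁅b i, y⁆
        + ⁅b i, y⁆ ⊗ₜ[F] a i + b i ⊗ₜ[F] ⁅a i, y⁆) = (0 : L ⊗[F] L)) := by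
  have hRs := hnd.adjoint_apply_eq_sum hsymm hR hadj
  have hker (x y : L) : R (R ⁅x, y⁆ + Rstar ⁅x, y⁆ + lam • ⁅x, y⁆) = 0 :=
    hR0 _ (add_add_smul_lie_mem_of_inducedQuotMap hth x y)
  refine ⟨?_, fun y => ?_⟩
  · refine hnd.eq_zero_of_forall_lid_rTensor_eq_zero _ fun u =>
      hnd.eq_zero_of_forall_lid_rTensor_eq_zero _ fun v => ?_
    rw [lid_rTensor_lid_rTensor_cybe hsymm hinv hR hRs]
    exact apply_lie_sub_apply_lie_add_lie_eq_zero hRB hcentroid hker u v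
  · refine hnd.eq_zero_of_forall_lid_rTensor_eq_zero _ fun u => ?_
    rw [lid_rTensor_invariance hsymm hinv hR hRs, hcentroid, sub_self]

theorem stmt_11
    (F : Type*) [Field F] [CharZero F]
    (L : Type*) [LieRing L] [LieAlgebra F L] [FiniteDimensional F L]
    (ω : LinearMap.BilinForm F L)
    (hnd : ω.Nondegenerate)
    (hsymm : ∀ x y : L, ω x y = ω y x)
    (hinv : ∀ x y z : L, ω ⁅x, y⁆ z = ω x ⁅y, z⁆)
    (ι : Type*) [Fintype ι] (a b : ι → L)
    (R Rstar : L →ₗ[F] L)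
    (hR : ∀ x : L, R x = ∑ i, ω (b i) x • a i)
    (hadj : ∀ x y : L, ω (R x) y = ω x (Rstar y))
    (lam : F)
    (hRB : ∀ x y : L, ⁅R x, R y⁆ = R (⁅R x, y⁆ + ⁅x, R y⁆ + lam • ⁅x, y⁆))
    (hcentroid : ∀ x y : L, R ⁅x, y⁆ + Rstar ⁅x, y⁆ = ⁅R x, y⁆ + ⁅Rstar x, y⁆)
    (I : LieIdeal F L)
    (hIsub : I ≤ ⁅(⊤ : LieIdeal F L), (⊤ : LieIdeal F L)⁆)
    (hR0 : ∀ x ∈ I, R x = 0)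
    (hRI : ∀ x ∈ I, R x ∈ I)
    (hRsI : ∀ x ∈ I, Rstar x ∈ I)
    (hRBbar : ∀ x y : L ⧸ I,
      ⁅inducedQuotMap F L I R hRI x, inducedQuotMap F L I R hRI y⁆ =
      inducedQuotMap F L I R hRI
        (⁅inducedQuotMap F L I R hRI x, y⁆ + ⁅x, inducedQuotMap F L I R hRI y⁆
          + lam • ⁅x, y⁆))
    (hth : ∀ z ∈ (⁅(⊤ : LieIdeal F (L ⧸ I)), (⊤ : LieIdeal F (L ⧸ I))⁆ : LieIdeal F (L ⧸ I)),
      inducedQuotMap F L I R hRI z + inducedQuotMap F L I Rstar hRsI z + lam • z = 0) :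
    (∑ i, ∑ j, (⁅a i, a j⁆ ⊗ₜ[F] (b i ⊗ₜ[F] b j)
        - a i ⊗ₜ[F] (⁅a j, b i⁆ ⊗ₜ[F] b j)
        + a i ⊗ₜ[F] (a j ⊗ₜ[F] ⁅b i, b j⁆)) = (0 : L ⊗[F] (L ⊗[F] L))) ∧
    (∀ y : L, ∑ i, (⁅a i, y⁆ ⊗ₜ[F] b i + a i ⊗ₜ[F] ⁅b i, y⁆
        + ⁅b i, y⁆ ⊗ₜ[F] a i + b i ⊗ₜ[F] ⁅a i, y⁆) = (0 : L ⊗[F] L)) :=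
  stmt_11_general F L ω hnd hsymm hinv ι a b R Rstar hR hadj lam hRB hcentroid I hR0 hRI hRsI hth
end

section
/- Let L be a finite-dimensional simple Lie algebra over a field F of characteristic 0 and let r = Σ_i a_i ⊗ b_i ≠ 0 be a solution of the classical Yang–Baxter equation such that r + τ(r) ≠ 0 and r + τ(r) is L-invariant. Then there exists a nondegenerate symmetric invariant bilinear form ω on L and a nonzero λ ∈ F such that the operator R(a) = Σ_i ω(b_i, a) a_i is a Rota–Baxter operator of weight λ and R(a) + R*(a) + λa = 0 for all a ∈ L, where R* is the adjoint of R with respect to ω. -/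
/-!
The symmetric part `s = r + τ r` gives a map `σ : L* → L`, `f ↦ (f ⊗ id) s`, which is
`L`-equivariant because `s` is invariant. Its range is then a nonzero ideal, so by simplicity `σ`
is an isomorphism, and `ω := σ⁻¹` is a nondegenerate invariant form, symmetric because `s` is.
For this `ω` one has `R + R* = σ ∘ ω = id`. Contracting the CYBE against `ω(·, x)` and `ω(·, y)`
in its last two factors gives `⁅R x, R y⁆ + R ⁅R y, x⁆ + R ⁅R* x, y⁆ = 0`, which together with
`R* = id - R` is the Rota–Baxter identity of weight `-1`.
-/

open TensorProduct

section Contraction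

variable {R M N : Type*} [CommRing R] [AddCommGroup M] [Module R M] [AddCommGroup N] [Module R N]

noncomputable def tensorToDualHom : M ⊗[R] N →ₗ[R] Module.Dual R M →ₗ[R] N :=
  dualTensorHom R (Module.Dual R M) N ∘ₗ (Module.Dual.eval R M).rTensor N

@[simp]
lemma tensorToDualHom_tmul (m : M) (n : N) (f : Module.Dual R M) :
    tensorToDualHom (m ⊗ₜ[R] n) f = f m • n := by
  simp [tensorToDualHom]

lemma tensorToDualHom_injective {K V W : Type*} [Field K] [AddCommGroup V] [Module K V]
    [AddCommGroup W] [Module K W] [FiniteDimensional K V] :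
    Function.Injective (tensorToDualHom : V ⊗[K] W →ₗ[K] Module.Dual K V →ₗ[K] W) :=
  (dualTensorHom_bijective ..).injective.comp ((Module.evalEquiv K V).rTensor W).injective

lemma apply_tensorToDualHom (t : M ⊗[R] M) (f g : Module.Dual R M) :
    f (tensorToDualHom t g) = g (tensorToDualHom (TensorProduct.comm R M M t) f) := by
  induction t using TensorProduct.induction_on with
  | zero => simp
  | tmul m n => simp [mul_comm]
  | add s t hs ht => simp [hs, ht]

lemma comm_sum_tmul_add_tmul {ι : Type*} (s : Finset ι) (a b : ι → M) :
    TensorProduct.comm R M M (∑ i ∈ s, (a i ⊗ₜ[R] b i + b i ⊗ₜ[R] a i)) =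
      ∑ i ∈ s, (a i ⊗ₜ[R] b i + b i ⊗ₜ[R] a i) := by
  simp only [map_sum, map_add, TensorProduct.comm_tmul, add_comm]

variable {L : Type*} [LieRing L] [LieAlgebra R L]

lemma tensorToDualHom_lie (y : L) (t : L ⊗[R] L) (f : Module.Dual R L) :
    tensorToDualHom ⁅y, t⁆ f =
      tensorToDualHom t (f ∘ₗ LieAlgebra.ad R L y) + ⁅y, tensorToDualHom t f⁆ := by
  induction t using TensorProduct.induction_on with
  | zero => simp
  | tmul m n => simp [LieModule.lie_tmul_right]
  | add s t hs ht => simp only [lie_add, map_add, LinearMap.add_apply, hs, ht]; abel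

lemma tensorToDualHom_comp_ad {t : L ⊗[R] L} {y : L} (ht : ⁅y, t⁆ = 0) (f : Module.Dual R L) :
    tensorToDualHom t (f ∘ₗ LieAlgebra.ad R L y) = ⁅tensorToDualHom t f, y⁆ := by
  rw [← lie_skew, eq_neg_iff_add_eq_zero, ← tensorToDualHom_lie, ht, map_zero,
    LinearMap.zero_apply]

lemma lie_sum_tmul_add_tmul_eq_zero {ι : Type*} {s : Finset ι} {a b : ι → L}
    (hinv : ∀ y : L, ∑ i ∈ s, (⁅a i, y⁆ ⊗ₜ[R] b i + a i ⊗ₜ[R] ⁅b i, y⁆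
        + ⁅b i, y⁆ ⊗ₜ[R] a i + b i ⊗ₜ[R] ⁅a i, y⁆) = 0) (y : L) :
    ⁅y, ∑ i ∈ s, (a i ⊗ₜ[R] b i + b i ⊗ₜ[R] a i)⁆ = 0 := by
  rw [← neg_eq_zero, ← hinv y]
  simp only [lie_sum, lie_add, LieModule.lie_tmul_right, ← Finset.sum_neg_distrib]
  refine Finset.sum_congr rfl fun i _ ↦ ?_
  simp only [← lie_skew y, neg_tmul, tmul_neg]
  abel

end Contraction

lemma bijective_of_comp_ad {K L : Type*} [Field K] [LieRing L] [LieAlgebra K L]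
    [FiniteDimensional K L] [LieAlgebra.IsSimple K L]
    (σ : Module.Dual K L →ₗ[K] L) (hσ : σ ≠ 0)
    (hσ_ad : ∀ f y, σ (f ∘ₗ LieAlgebra.ad K L y) = ⁅σ f, y⁆) : Function.Bijective σ := by
  let I : LieIdeal K L :=
    { LinearMap.range σ with
      lie_mem := by
        rintro y _ ⟨f, rfl⟩
        exact ⟨-(f ∘ₗ LieAlgebra.ad K L y), by rw [map_neg, hσ_ad, lie_skew]⟩ }
  have hI : I = ⊤ := (LieAlgebra.IsSimple.eq_bot_or_eq_top I).resolve_left fun h ↦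
    hσ <| LinearMap.range_eq_bot.mp <| congrArg LieSubmodule.toSubmodule h
  have hsurj : Function.Surjective σ := fun z ↦ (hI ▸ LieSubmodule.mem_top z : z ∈ I)
  exact ⟨(LinearMap.injective_iff_surjective_of_finrank_eq_finrank
    Subspace.dual_finrank_eq).mpr hsurj, hsurj⟩

section DualEquiv

variable {R L : Type*} [CommRing R] [LieRing L] [LieAlgebra R L] (e : Module.Dual R L ≃ₗ[R] L)

lemma dualEquiv_symm_comm (he : ∀ f g : Module.Dual R L, f (e g) = g (e f)) (x y : L) :
    e.symm x y = e.symm y x := by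
  simpa using he (e.symm x) (e.symm y)

lemma dualEquiv_symm_lie (he : ∀ f y, e (f ∘ₗ LieAlgebra.ad R L y) = ⁅e f, y⁆) (x y z : L) :
    e.symm ⁅x, y⁆ z = e.symm x ⁅y, z⁆ := by
  have : e.symm ⁅x, y⁆ = e.symm x ∘ₗ LieAlgebra.ad R L y := by
    rw [e.symm_apply_eq, he, e.apply_symm_apply]
  simp [this]

lemma dualEquiv_symm_nondegenerate (he : ∀ f g : Module.Dual R L, f (e g) = g (e f)) :
    LinearMap.BilinForm.Nondegenerate (e.symm : LinearMap.BilinForm R L) := by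
  have hsep : LinearMap.SeparatingLeft (e.symm : LinearMap.BilinForm R L) :=
    LinearMap.separatingLeft_iff_ker_eq_bot.mpr (LinearEquiv.ker _)
  refine ⟨hsep, fun y hy ↦ hsep y fun x ↦ ?_⟩
  simpa [dualEquiv_symm_comm e he] using hy x

end DualEquiv

section ROperator

variable {R M ι : Type*} [CommRing R] [AddCommGroup M] [Module R M] [Fintype ι]
  (ω : LinearMap.BilinForm R M) (a b : ι → M)

noncomputable def rOperator : M →ₗ[R] M := ∑ i, (ω (b i)).smulRight (a i)

lemma rOperator_apply (x : M) : rOperator ω a b x = ∑ i, ω (b i) x • a i := by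
  simp [rOperator]

variable {ω} in
lemma rOperator_adjoint (hω : ∀ x y, ω x y = ω y x) (x y : M) :
    ω (rOperator ω a b x) y = ω x (rOperator ω b a y) := by
  simp only [rOperator_apply, map_sum, map_smul, LinearMap.sum_apply, LinearMap.smul_apply,
    smul_eq_mul]
  exact Finset.sum_congr rfl fun i _ ↦ by rw [hω x (b i), mul_comm]

lemma rOperator_add_rOperator_swap (x : M) :
    rOperator ω a b x + rOperator ω b a x =
      tensorToDualHom (∑ i, (a i ⊗ₜ[R] b i + b i ⊗ₜ[R] a i)) (ω.flip x) := by
  simp [rOperator_apply, map_sum, Finset.sum_add_distrib, add_comm]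

noncomputable def contractLastTwo (x y : M) : M ⊗[R] (M ⊗[R] M) →ₗ[R] M :=
  (TensorProduct.rid R M).toLinearMap ∘ₗ
    (TensorProduct.lift ((ω.flip x).smulRight (ω.flip y))).lTensor M

lemma contractLastTwo_tmul (x y u v w : M) :
    contractLastTwo ω x y (u ⊗ₜ[R] (v ⊗ₜ[R] w)) = (ω v x * ω w y) • u := by
  simp [contractLastTwo]

end ROperator

section RotaBaxter

variable {R L ι : Type*} [CommRing R] [LieRing L] [LieAlgebra R L] [Fintype ι]
  {ω : LinearMap.BilinForm R L} {a b : ι → L}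

lemma rOperator_cybe (hω : ∀ x y z, ω ⁅x, y⁆ z = ω x ⁅y, z⁆)
    (hCYBE : ∑ i, ∑ j, (⁅a i, a j⁆ ⊗ₜ[R] (b i ⊗ₜ[R] b j)
        - a i ⊗ₜ[R] (⁅a j, b i⁆ ⊗ₜ[R] b j)
        + a i ⊗ₜ[R] (a j ⊗ₜ[R] ⁅b i, b j⁆)) = (0 : L ⊗[R] (L ⊗[R] L))) (x y : L) :
    ⁅rOperator ω a b x, rOperator ω a b y⁆ + rOperator ω a b ⁅rOperator ω a b y, x⁆
      + rOperator ω a b ⁅rOperator ω b a x, y⁆ = 0 := by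
  have h₁ : ⁅rOperator ω a b x, rOperator ω a b y⁆ =
      ∑ i, ∑ j, (ω (b i) x * ω (b j) y) • ⁅a i, a j⁆ := by
    simp only [rOperator_apply, sum_lie_sum, smul_lie, lie_smul, smul_smul, mul_comm]
  have h₂ : rOperator ω a b ⁅rOperator ω a b y, x⁆ =
      ∑ i, ∑ j, (ω (b i) ⁅a j, x⁆ * ω (b j) y) • a i := by
    simp only [rOperator_apply, sum_lie, smul_lie, map_sum, map_smul, Finset.smul_sum, smul_smul]
    rw [Finset.sum_comm]
    simp only [mul_comm]
  have h₃ : rOperator ω a b ⁅rOperator ω b a x, y⁆ =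
      ∑ i, ∑ j, (ω (a j) x * ω (b i) ⁅b j, y⁆) • a i := by
    simp only [rOperator_apply, sum_lie, smul_lie, map_sum, map_smul, Finset.smul_sum, smul_smul]
    exact Finset.sum_comm
  have hskew : ∀ i j, ω ⁅a j, b i⁆ x = -ω (b i) ⁅a j, x⁆ := fun i j ↦ by
    rw [← lie_skew, map_neg, LinearMap.neg_apply, hω]
  have hcontract := congrArg (contractLastTwo ω x y) hCYBE
  simp only [map_sum, map_add, map_sub, contractLastTwo_tmul, map_zero, hskew, hω, neg_mul,
    neg_smul, sub_neg_eq_add] at hcontract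
  rw [h₁, h₂, h₃, ← hcontract]
  simp only [Finset.sum_add_distrib]

lemma rOperator_rotaBaxter (hω : ∀ x y z, ω ⁅x, y⁆ z = ω x ⁅y, z⁆)
    (hCYBE : ∑ i, ∑ j, (⁅a i, a j⁆ ⊗ₜ[R] (b i ⊗ₜ[R] b j)
        - a i ⊗ₜ[R] (⁅a j, b i⁆ ⊗ₜ[R] b j)
        + a i ⊗ₜ[R] (a j ⊗ₜ[R] ⁅b i, b j⁆)) = (0 : L ⊗[R] (L ⊗[R] L)))
    (hsum : ∀ x, rOperator ω a b x + rOperator ω b a x = x) (x y : L) :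
    ⁅rOperator ω a b x, rOperator ω a b y⁆ = rOperator ω a b
      (⁅rOperator ω a b x, y⁆ + ⁅x, rOperator ω a b y⁆ + (-1 : R) • ⁅x, y⁆) := by
  have h := rOperator_cybe hω hCYBE x y
  rw [eq_sub_of_add_eq' (hsum x), ← lie_skew (rOperator ω a b y) x, sub_lie, map_neg,
    map_sub] at h
  rw [map_add, map_add, map_smul, neg_one_smul, ← sub_eq_zero, ← h]
  abel

end RotaBaxter

theorem stmt_12_general (F : Type*) [Field F]
    (L : Type*) [LieRing L] [LieAlgebra F L] [FiniteDimensional F L]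
    [LieAlgebra.IsSimple F L]
    (ι : Type*) [Fintype ι] (a b : ι → L)
    (hCYBE : ∑ i, ∑ j, (⁅a i, a j⁆ ⊗ₜ[F] (b i ⊗ₜ[F] b j)
        - a i ⊗ₜ[F] (⁅a j, b i⁆ ⊗ₜ[F] b j)
        + a i ⊗ₜ[F] (a j ⊗ₜ[F] ⁅b i, b j⁆)) = (0 : L ⊗[F] (L ⊗[F] L)))
    (hsympart : ∑ i, (a i ⊗ₜ[F] b i + b i ⊗ₜ[F] a i) ≠ (0 : L ⊗[F] L))
    (hinvr : ∀ y : L, ∑ i, (⁅a i, y⁆ ⊗ₜ[F] b i + a i ⊗ₜ[F] ⁅b i, y⁆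
        + ⁅b i, y⁆ ⊗ₜ[F] a i + b i ⊗ₜ[F] ⁅a i, y⁆) = (0 : L ⊗[F] L)) :
    ∃ ω : LinearMap.BilinForm F L,
      ω.Nondegenerate ∧
      (∀ x y : L, ω x y = ω y x) ∧
      (∀ x y z : L, ω ⁅x, y⁆ z = ω x ⁅y, z⁆) ∧
      ∃ lam : F, lam ≠ 0 ∧
      ∃ R Rstar : L →ₗ[F] L,
        (∀ x : L, R x = ∑ i, ω (b i) x • a i) ∧
        (∀ x y : L, ω (R x) y = ω x (Rstar y)) ∧
        (∀ x y : L, ⁅R x, R y⁆ = R (⁅R x, y⁆ + ⁅x, R y⁆ + lam • ⁅x, y⁆)) ∧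
        (∀ x : L, R x + Rstar x + lam • x = 0) := by
  set s := ∑ i, (a i ⊗ₜ[F] b i + b i ⊗ₜ[F] a i)
  have hσ : tensorToDualHom s ≠ 0 := (tensorToDualHom_injective.ne_iff' (map_zero _)).mpr hsympart
  have hσ_ad : ∀ f y, tensorToDualHom s (f ∘ₗ LieAlgebra.ad F L y) = ⁅tensorToDualHom s f, y⁆ :=
    fun f y ↦ tensorToDualHom_comp_ad (lie_sum_tmul_add_tmul_eq_zero hinvr y) f
  let e := LinearEquiv.ofBijective _ (bijective_of_comp_ad _ hσ hσ_ad)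
  have he : ∀ f g : Module.Dual F L, f (e g) = g (e f) := fun f g ↦
    (apply_tensorToDualHom s f g).trans (by rw [comm_sum_tmul_add_tmul]; rfl)
  set ω : LinearMap.BilinForm F L := e.symm.toLinearMap
  have hsymm : ∀ x y, ω x y = ω y x := dualEquiv_symm_comm e he
  have hlie : ∀ x y z, ω ⁅x, y⁆ z = ω x ⁅y, z⁆ := dualEquiv_symm_lie e hσ_ad
  have hsum : ∀ x, rOperator ω a b x + rOperator ω b a x = x := fun x ↦ by
    rw [rOperator_add_rOperator_swap, show ω.flip = ω from LinearMap.ext₂ fun x y ↦ hsymm y x]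
    exact e.apply_symm_apply x
  refine ⟨ω, dualEquiv_symm_nondegenerate e he, hsymm, hlie, -1, by simp,
    rOperator ω a b, rOperator ω b a, rOperator_apply ω a b, rOperator_adjoint a b hsymm,
    rOperator_rotaBaxter hlie hCYBE hsum, fun x ↦ by rw [hsum, neg_one_smul, add_neg_cancel]⟩

theorem stmt_12 (F : Type*) [Field F] [CharZero F]
    (L : Type*) [LieRing L] [LieAlgebra F L] [FiniteDimensional F L]
    [LieAlgebra.IsSimple F L]
    (ι : Type*) [Fintype ι] (a b : ι → L)
    (hr : ∑ i, a i ⊗ₜ[F] b i ≠ (0 : L ⊗[F] L))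
    (hCYBE : ∑ i, ∑ j, (⁅a i, a j⁆ ⊗ₜ[F] (b i ⊗ₜ[F] b j)
        - a i ⊗ₜ[F] (⁅a j, b i⁆ ⊗ₜ[F] b j)
        + a i ⊗ₜ[F] (a j ⊗ₜ[F] ⁅b i, b j⁆)) = (0 : L ⊗[F] (L ⊗[F] L)))
    (hsympart : ∑ i, (a i ⊗ₜ[F] b i + b i ⊗ₜ[F] a i) ≠ (0 : L ⊗[F] L))
    (hinvr : ∀ y : L, ∑ i, (⁅a i, y⁆ ⊗ₜ[F] b i + a i ⊗ₜ[F] ⁅b i, y⁆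
        + ⁅b i, y⁆ ⊗ₜ[F] a i + b i ⊗ₜ[F] ⁅a i, y⁆) = (0 : L ⊗[F] L)) :
    ∃ ω : LinearMap.BilinForm F L,
      ω.Nondegenerate ∧
      (∀ x y : L, ω x y = ω y x) ∧
      (∀ x y z : L, ω ⁅x, y⁆ z = ω x ⁅y, z⁆) ∧
      ∃ lam : F, lam ≠ 0 ∧
      ∃ R Rstar : L →ₗ[F] L,
        (∀ x : L, R x = ∑ i, ω (b i) x • a i) ∧
        (∀ x y : L, ω (R x) y = ω x (Rstar y)) ∧
        (∀ x y : L, ⁅R x, R y⁆ = R (⁅R x, y⁆ + ⁅x, R y⁆ + lam • ⁅x, y⁆)) ∧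
        (∀ x : L, R x + Rstar x + lam • x = 0) :=
  stmt_12_general F L ι a b hCYBE hsympart hinvr
end

section
/- Suppose r is a solution of the classical Yang–Baxter equation on L with r + τ(r) L-invariant, and let λ ∈ F be nonzero. Then R and R* are both Rota–Baxter operators of weight λ if and only if the commutator ideal [L, L] decomposes as a direct sum of two Lie ideals [L, L] = I_1 ⊕ I_2 of L such that R(I_1) = R*(I_1) = 0 and R(x) + R*(x) + λx = 0 for all x ∈ I_2. -/
/-!
Put `S = R + R*`. Contracting the invariance of `r + τ(r)` against `ω` says that `S` commutes with
every `ad y`, and contracting the CYBE against `ω` in two ways gives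
`⁅R x, R y⁆ = R (⁅R x, y⁆ + ⁅x, R y⁆ - S ⁅x, y⁆)` and the same identity for `R*`.
So `R` and `R*` are both Rota–Baxter operators of weight `λ` iff `R ∘ T` and `R* ∘ T` vanish on
`[L, L]`, where `T = S + λ`. Then `S ∘ T = 0` there, i.e. the `ad`-equivariant map `T` satisfies
`T² = λ T` on `[L, L]`, which therefore splits into the ideals `ker (T - λ) = ker S` (on which `R`
and `R*` vanish) and `ker T`. Conversely, given such a splitting `T` maps `[L, L]` into `I₁`.
-/

open TensorProduct

namespace LinearMap.BilinForm

variable {F L M : Type*} [CommSemiring F] [AddCommMonoid L] [Module F L] [AddCommMonoid M]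
  [Module F M]

def contractLeft (ω : LinearMap.BilinForm F L) (x : L) : L ⊗[F] M →ₗ[F] M :=
  (TensorProduct.lid F M).toLinearMap ∘ₗ (ω.flip x).rTensor M

def contractRight (ω : LinearMap.BilinForm F L) (x : L) : M ⊗[F] L →ₗ[F] M :=
  (TensorProduct.rid F M).toLinearMap ∘ₗ (ω.flip x).lTensor M

@[simp]
theorem contractLeft_tmul (ω : LinearMap.BilinForm F L) (x u : L) (m : M) :
    ω.contractLeft x (u ⊗ₜ m) = ω u x • m := by
  simp [contractLeft]

@[simp]
theorem contractRight_tmul (ω : LinearMap.BilinForm F L) (x u : L) (m : M) :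
    ω.contractRight x (m ⊗ₜ u) = ω u x • m := by
  simp [contractRight]

end LinearMap.BilinForm

section LieAlgebra

variable {F L : Type*} [CommRing F] [LieRing L] [LieAlgebra F L]

theorem sum_smul_lie_sum_smul {ι κ : Type*} (s : Finset ι) (t : Finset κ) (c : ι → F) (d : κ → F)
    (u : ι → L) (v : κ → L) :
    ⁅∑ i ∈ s, c i • u i, ∑ j ∈ t, d j • v j⁆ = ∑ i ∈ s, ∑ j ∈ t, (c i * d j) • ⁅u i, v j⁆ := by
  simp_rw [sum_lie, smul_lie, lie_sum, lie_smul, Finset.smul_sum, smul_smul]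

theorem rotaBaxter_iff_of_lie_apply_apply (P : L →ₗ[F] L) (S : L → L) (lam : F)
    (h : ∀ x y : L, ⁅P x, P y⁆ = P (⁅P x, y⁆ + ⁅x, P y⁆ - S ⁅x, y⁆)) :
    (∀ x y : L, ⁅P x, P y⁆ = P (⁅P x, y⁆ + ⁅x, P y⁆ + lam • ⁅x, y⁆)) ↔
      ∀ x y : L, P (S ⁅x, y⁆ + lam • ⁅x, y⁆) = 0 := by
  refine forall₂_congr fun x y => ?_
  rw [h, eq_comm, ← sub_eq_zero, ← map_sub]
  congr! 2
  abel

theorem LieModuleHom.apply_mem_lie_top_top (T : L →ₗ⁅F,L⁆ L) {x : L}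
    (hx : x ∈ ⁅(⊤ : LieIdeal F L), (⊤ : LieIdeal F L)⁆) :
    T x ∈ ⁅(⊤ : LieIdeal F L), (⊤ : LieIdeal F L)⁆ := by
  have hle : LieSubmodule.map T ⁅(⊤ : LieIdeal F L), (⊤ : LieIdeal F L)⁆ ≤
      ⁅(⊤ : LieIdeal F L), (⊤ : LieIdeal F L)⁆ := by
    rw [LieSubmodule.map_bracket_eq]
    exact LieSubmodule.mono_lie_right _ le_top
  exact hle (LieSubmodule.mem_map_of_mem hx)

theorem LinearMap.apply_eq_zero_of_mem_lie_top_top {M : Type*} [AddCommGroup M] [Module F M]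
    (f : L →ₗ[F] M) (hf : ∀ x y : L, f ⁅x, y⁆ = 0) {x : L}
    (hx : x ∈ ⁅(⊤ : LieIdeal F L), (⊤ : LieIdeal F L)⁆) : f x = 0 := by
  rw [← LieSubmodule.mem_toSubmodule, LieSubmodule.lieIdeal_oper_eq_linear_span'] at hx
  refine Submodule.span_le (p := LinearMap.ker f) |>.2 ?_ hx
  rintro _ ⟨u, -, v, -, rfl⟩
  exact hf u v

end LieAlgebra

section LieModule

variable {F L M : Type*} [Field F] [LieRing L] [LieAlgebra F L] [AddCommGroup M] [Module F M]
  [LieRingModule L M] [LieModule F L M]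

theorem LieModuleHom.inf_ker_sub_smul_id_sup_inf_ker_eq (T : M →ₗ⁅F,L⁆ M) {lam : F} (hlam : lam ≠ 0)
    {N : LieSubmodule F L M} (hN : ∀ x ∈ N, T x ∈ N) (hT : ∀ x ∈ N, T (T x) = lam • T x) :
    N ⊓ (T - lam • LieModuleHom.id).ker ⊔ N ⊓ T.ker = N := by
  refine le_antisymm (sup_le inf_le_left inf_le_left) fun x hx => ?_
  rw [LieSubmodule.mem_sup]
  refine ⟨lam⁻¹ • T x, ⟨N.smul_mem _ (hN x hx), ?_⟩,
    x - lam⁻¹ • T x, ⟨N.sub_mem hx (N.smul_mem _ (hN x hx)), ?_⟩, add_sub_cancel _ _⟩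
  · simp [hT x hx]
  · simp [hT x hx, smul_smul, hlam]

theorem LieModuleHom.ker_sub_smul_id_inf_ker_eq_bot (T : M →ₗ⁅F,L⁆ M) {lam : F} (hlam : lam ≠ 0) :
    (T - lam • LieModuleHom.id).ker ⊓ T.ker = ⊥ := by
  refine eq_bot_iff.2 fun x hx => ?_
  obtain ⟨h₁, h₂ : T x = 0⟩ := hx
  simpa [h₂, hlam] using h₁

end LieModule

section Decomposition

variable {F L : Type*} [Field F] [LieRing L] [LieAlgebra F L]

theorem exists_mem_smul_eq_of_mem_sup {R R' : L →ₗ[F] L} {lam : F} {I₁ I₂ : LieIdeal F L}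
    (h₁ : ∀ x ∈ I₁, R x = 0 ∧ R' x = 0) (h₂ : ∀ x ∈ I₂, R x + R' x + lam • x = 0) {z : L}
    (hz : z ∈ I₁ ⊔ I₂) : ∃ u ∈ I₁, (R + R') z + lam • z = lam • u := by
  obtain ⟨u, hu, v, hv, rfl⟩ := (LieSubmodule.mem_sup _ _ _).1 hz
  refine ⟨u, hu, ?_⟩
  rw [← add_zero (lam • u), ← h₂ v hv]
  simp only [LinearMap.add_apply, map_add, (h₁ u hu).1, (h₁ u hu).2, smul_add]
  abel

theorem forall_lie_iff_exists_lieIdeal {R R' : L →ₗ[F] L}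
    (hS : ∀ x y : L, R ⁅x, y⁆ + R' ⁅x, y⁆ = ⁅x, R y + R' y⁆) {lam : F} (hlam : lam ≠ 0) :
    ((∀ x y : L, R ((R + R') ⁅x, y⁆ + lam • ⁅x, y⁆) = 0) ∧
      ∀ x y : L, R' ((R + R') ⁅x, y⁆ + lam • ⁅x, y⁆) = 0) ↔
    ∃ I₁ I₂ : LieIdeal F L, I₁ ⊔ I₂ = ⁅(⊤ : LieIdeal F L), (⊤ : LieIdeal F L)⁆ ∧ I₁ ⊓ I₂ = ⊥ ∧
      (∀ x ∈ I₁, R x = 0 ∧ R' x = 0) ∧ ∀ x ∈ I₂, R x + R' x + lam • x = 0 := by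
  constructor
  · rintro ⟨hR, hR'⟩
    set D := ⁅(⊤ : LieIdeal F L), (⊤ : LieIdeal F L)⁆
    let T : L →ₗ⁅F,L⁆ L :=
      { R + R' + lam • LinearMap.id with
        map_lie' := fun {x y} => by simp [← hS, lie_add] }
    have hRT x (hx : x ∈ D) : R (T x) = 0 :=
      (R ∘ₗ T.toLinearMap).apply_eq_zero_of_mem_lie_top_top hR hx
    have hR'T x (hx : x ∈ D) : R' (T x) = 0 :=
      (R' ∘ₗ T.toLinearMap).apply_eq_zero_of_mem_lie_top_top hR' hx
    have hTT x (hx : x ∈ D) : T (T x) = lam • T x := by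
      change R (T x) + R' (T x) + lam • T x = _
      rw [hRT x hx, hR'T x hx, zero_add, zero_add]
    refine ⟨_, _, T.inf_ker_sub_smul_id_sup_inf_ker_eq hlam (fun _ => T.apply_mem_lie_top_top) hTT,
      eq_bot_iff.2 ?_, fun x hx => ?_, fun x hx => LieModuleHom.mem_ker.1 hx.2⟩
    · rw [← T.ker_sub_smul_id_inf_ker_eq_bot hlam]
      exact inf_le_inf inf_le_right inf_le_right
    · have hTx : T x = lam • x := sub_eq_zero.1 (LieModuleHom.mem_ker.1 hx.2)
      have hRx := hRT x hx.1
      have hR'x := hR'T x hx.1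
      rw [hTx, map_smul, smul_eq_zero_iff_right hlam] at hRx hR'x
      exact ⟨hRx, hR'x⟩
  · rintro ⟨I₁, I₂, hsup, -, h₁, h₂⟩
    have hT x y : ∃ u ∈ I₁, (R + R') ⁅x, y⁆ + lam • ⁅x, y⁆ = lam • u :=
      exists_mem_smul_eq_of_mem_sup h₁ h₂
        (hsup ▸ LieSubmodule.lie_mem_lie (LieSubmodule.mem_top x) (LieSubmodule.mem_top y))
    refine ⟨fun x y => ?_, fun x y => ?_⟩ <;> obtain ⟨u, hu, hTu⟩ := hT x y <;>
      simp only [hTu, map_smul, (h₁ u hu).1, (h₁ u hu).2, smul_zero]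

end Decomposition

section QuadraticLieAlgebra

variable {F L ι : Type*} [CommRing F] [LieRing L] [LieAlgebra F L] [Fintype ι]
  {ω : LinearMap.BilinForm F L} {a b : ι → L} {R R' : L →ₗ[F] L}

theorem apply_lie_eq_neg_apply_lie (hinv : ∀ x y z : L, ω ⁅x, y⁆ z = ω x ⁅y, z⁆) (u v w : L) :
    ω ⁅u, v⁆ w = -ω v ⁅u, w⁆ := by
  rw [← lie_skew, map_neg, LinearMap.neg_apply, hinv]

theorem adjoint_apply_eq_sum (hnd : ω.SeparatingLeft) (hsymm : ∀ x y : L, ω x y = ω y x)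
    (hR : ∀ x, R x = ∑ i, ω (b i) x • a i) (hadj : ∀ x y : L, ω (R x) y = ω x (R' y)) (x : L) :
    R' x = ∑ i, ω (a i) x • b i := by
  refine sub_eq_zero.mp (hnd _ fun z => ?_)
  rw [hsymm, map_sub, ← hadj, hR]
  simp only [map_sum, map_smul, LinearMap.sum_apply, LinearMap.smul_apply, smul_eq_mul]
  rw [sub_eq_zero]
  exact Finset.sum_congr rfl fun i _ => by rw [hsymm z, mul_comm]

theorem add_apply_lie_eq_lie_add_apply (hinv : ∀ x y z : L, ω ⁅x, y⁆ z = ω x ⁅y, z⁆)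
    (hR : ∀ x, R x = ∑ i, ω (b i) x • a i) (hR' : ∀ x, R' x = ∑ i, ω (a i) x • b i)
    (hinvr : ∀ y : L, ∑ i, (⁅a i, y⁆ ⊗ₜ[F] b i + a i ⊗ₜ[F] ⁅b i, y⁆
        + ⁅b i, y⁆ ⊗ₜ[F] a i + b i ⊗ₜ[F] ⁅a i, y⁆) = (0 : L ⊗[F] L)) (x y : L) :
    R ⁅x, y⁆ + R' ⁅x, y⁆ = ⁅x, R y + R' y⁆ := by
  have h := congrArg (ω.contractRight y) (hinvr x)
  simp only [map_sum, map_add, map_zero, LinearMap.BilinForm.contractRight_tmul, hinv] at h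
  rw [← sub_eq_zero, ← h, ← lie_skew x (R y + R' y), hR y, hR' y, hR ⁅x, y⁆, hR' ⁅x, y⁆]
  simp only [add_lie, sum_lie, smul_lie, Finset.sum_add_distrib]
  abel

theorem lie_apply_apply_eq_of_cybe (hinv : ∀ x y z : L, ω ⁅x, y⁆ z = ω x ⁅y, z⁆)
    (hR : ∀ x, R x = ∑ i, ω (b i) x • a i) (hR' : ∀ x, R' x = ∑ i, ω (a i) x • b i)
    (hCYBE : ∑ i, ∑ j, (⁅a i, a j⁆ ⊗ₜ[F] (b i ⊗ₜ[F] b j)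
        - a i ⊗ₜ[F] (⁅a j, b i⁆ ⊗ₜ[F] b j)
        + a i ⊗ₜ[F] (a j ⊗ₜ[F] ⁅b i, b j⁆)) = (0 : L ⊗[F] (L ⊗[F] L)))
    (hS : ∀ x y : L, R ⁅x, y⁆ + R' ⁅x, y⁆ = ⁅x, R y + R' y⁆) (x y : L) :
    ⁅R x, R y⁆ = R (⁅R x, y⁆ + ⁅x, R y⁆ - (R + R') ⁅x, y⁆) := by
  have hcybe : ⁅R x, R y⁆ + R ⁅R y, x⁆ + R ⁅R' x, y⁆ = 0 := by
    have h := congrArg (ω.contractRight x ∘ₗ (ω.contractRight y).lTensor L) hCYBE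
    simp only [map_sum, map_add, map_sub, map_zero, LinearMap.comp_apply, LinearMap.lTensor_tmul,
      LinearMap.BilinForm.contractRight_tmul, map_smul, LinearMap.smul_apply, smul_eq_mul,
      apply_lie_eq_neg_apply_lie hinv (a _) (b _) x] at h
    simp only [hinv] at h
    rw [hR x, hR y, hR' x, sum_smul_lie_sum_smul]
    simp only [hR, sum_lie, smul_lie, map_sum, map_smul, smul_eq_mul, Finset.sum_smul]
    rw [← h]
    simp only [← Finset.sum_add_distrib]
    refine Finset.sum_congr rfl fun i _ => Finset.sum_congr rfl fun j _ => ?_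
    module
  have hS' : (R + R') ⁅x, y⁆ = ⁅R x, y⁆ + ⁅R' x, y⁆ := by
    rw [← lie_skew, map_neg, LinearMap.add_apply, hS, ← add_lie, lie_skew]
  rw [hS', ← lie_skew x (R y), ← sub_eq_zero, ← hcybe]
  simp only [map_add, map_sub, map_neg]
  abel

theorem lie_adjoint_apply_apply_eq_of_cybe (hinv : ∀ x y z : L, ω ⁅x, y⁆ z = ω x ⁅y, z⁆)
    (hR : ∀ x, R x = ∑ i, ω (b i) x • a i) (hR' : ∀ x, R' x = ∑ i, ω (a i) x • b i)
    (hCYBE : ∑ i, ∑ j, (⁅a i, a j⁆ ⊗ₜ[F] (b i ⊗ₜ[F] b j)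
        - a i ⊗ₜ[F] (⁅a j, b i⁆ ⊗ₜ[F] b j)
        + a i ⊗ₜ[F] (a j ⊗ₜ[F] ⁅b i, b j⁆)) = (0 : L ⊗[F] (L ⊗[F] L)))
    (hS : ∀ x y : L, R ⁅x, y⁆ + R' ⁅x, y⁆ = ⁅x, R y + R' y⁆) (x y : L) :
    ⁅R' x, R' y⁆ = R' (⁅R' x, y⁆ + ⁅x, R' y⁆ - (R + R') ⁅x, y⁆) := by
  have hcybe : ⁅R' x, R' y⁆ = R' ⁅R y, x⁆ + R' ⁅R' x, y⁆ := by
    have h := congrArg (ω.contractLeft y ∘ₗ ω.contractLeft x) hCYBE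
    simp only [map_sum, map_add, map_sub, map_zero, LinearMap.comp_apply,
      LinearMap.BilinForm.contractLeft_tmul, map_smul,
      apply_lie_eq_neg_apply_lie hinv (a _) (a _) x] at h
    simp only [hinv] at h
    rw [hR y, hR' x, hR' y, sum_smul_lie_sum_smul]
    simp only [sum_lie, smul_lie, map_sum, map_smul]
    simp only [hR', Finset.smul_sum]
    rw [← sub_eq_zero, ← h]
    simp only [← Finset.sum_add_distrib, ← Finset.sum_sub_distrib]
    refine Finset.sum_congr rfl fun i _ => Finset.sum_congr rfl fun j _ => ?_
    module
  rw [LinearMap.add_apply, hS, hcybe, lie_add, ← lie_skew x (R y)]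
  simp only [map_add, map_sub, map_neg]
  abel

end QuadraticLieAlgebra

theorem stmt_13_general
    (F : Type*) [Field F]
    (L : Type*) [LieRing L] [LieAlgebra F L]
    (ω : LinearMap.BilinForm F L)
    (hnd : ω.Nondegenerate)
    (hsymm : ∀ x y : L, ω x y = ω y x)
    (hinv : ∀ x y z : L, ω ⁅x, y⁆ z = ω x ⁅y, z⁆)
    (ι : Type*) [Fintype ι] (a b : ι → L)
    (R Rstar : L →ₗ[F] L)
    (hR : ∀ x : L, R x = ∑ i, ω (b i) x • a i)
    (hadj : ∀ x y : L, ω (R x) y = ω x (Rstar y))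
    (hCYBE : ∑ i, ∑ j, (⁅a i, a j⁆ ⊗ₜ[F] (b i ⊗ₜ[F] b j)
        - a i ⊗ₜ[F] (⁅a j, b i⁆ ⊗ₜ[F] b j)
        + a i ⊗ₜ[F] (a j ⊗ₜ[F] ⁅b i, b j⁆)) = (0 : L ⊗[F] (L ⊗[F] L)))
    (hinvr : ∀ y : L, ∑ i, (⁅a i, y⁆ ⊗ₜ[F] b i + a i ⊗ₜ[F] ⁅b i, y⁆
        + ⁅b i, y⁆ ⊗ₜ[F] a i + b i ⊗ₜ[F] ⁅a i, y⁆) = (0 : L ⊗[F] L))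
    (lam : F) (hlam : lam ≠ 0) :
    ((∀ x y : L, ⁅R x, R y⁆ = R (⁅R x, y⁆ + ⁅x, R y⁆ + lam • ⁅x, y⁆)) ∧
     (∀ x y : L, ⁅Rstar x, Rstar y⁆ = Rstar (⁅Rstar x, y⁆ + ⁅x, Rstar y⁆ + lam • ⁅x, y⁆)))
    ↔ (∃ I₁ I₂ : LieIdeal F L,
        I₁ ⊔ I₂ = ⁅(⊤ : LieIdeal F L), (⊤ : LieIdeal F L)⁆ ∧
        I₁ ⊓ I₂ = ⊥ ∧
        (∀ x ∈ I₁, R x = 0 ∧ Rstar x = 0) ∧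
        (∀ x ∈ I₂, R x + Rstar x + lam • x = 0)) := by
  have hRstar := adjoint_apply_eq_sum hnd.1 hsymm hR hadj
  have hS := add_apply_lie_eq_lie_add_apply hinv hR hRstar hinvr
  rw [rotaBaxter_iff_of_lie_apply_apply R _ lam
      (lie_apply_apply_eq_of_cybe hinv hR hRstar hCYBE hS),
    rotaBaxter_iff_of_lie_apply_apply Rstar _ lam
      (lie_adjoint_apply_apply_eq_of_cybe hinv hR hRstar hCYBE hS)]
  exact forall_lie_iff_exists_lieIdeal hS hlam

theorem stmt_13
    (F : Type*) [Field F] [CharZero F]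
    (L : Type*) [LieRing L] [LieAlgebra F L] [FiniteDimensional F L]
    (ω : LinearMap.BilinForm F L)
    (hnd : ω.Nondegenerate)
    (hsymm : ∀ x y : L, ω x y = ω y x)
    (hinv : ∀ x y z : L, ω ⁅x, y⁆ z = ω x ⁅y, z⁆)
    (ι : Type*) [Fintype ι] (a b : ι → L)
    (R Rstar : L →ₗ[F] L)
    (hR : ∀ x : L, R x = ∑ i, ω (b i) x • a i)
    (hadj : ∀ x y : L, ω (R x) y = ω x (Rstar y))
    (hCYBE : ∑ i, ∑ j, (⁅a i, a j⁆ ⊗ₜ[F] (b i ⊗ₜ[F] b j)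
        - a i ⊗ₜ[F] (⁅a j, b i⁆ ⊗ₜ[F] b j)
        + a i ⊗ₜ[F] (a j ⊗ₜ[F] ⁅b i, b j⁆)) = (0 : L ⊗[F] (L ⊗[F] L)))
    (hinvr : ∀ y : L, ∑ i, (⁅a i, y⁆ ⊗ₜ[F] b i + a i ⊗ₜ[F] ⁅b i, y⁆
        + ⁅b i, y⁆ ⊗ₜ[F] a i + b i ⊗ₜ[F] ⁅a i, y⁆) = (0 : L ⊗[F] L))
    (lam : F) (hlam : lam ≠ 0) :
    ((∀ x y : L, ⁅R x, R y⁆ = R (⁅R x, y⁆ + ⁅x, R y⁆ + lam • ⁅x, y⁆)) ∧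
     (∀ x y : L, ⁅Rstar x, Rstar y⁆ = Rstar (⁅Rstar x, y⁆ + ⁅x, Rstar y⁆ + lam • ⁅x, y⁆)))
    ↔ (∃ I₁ I₂ : LieIdeal F L,
        I₁ ⊔ I₂ = ⁅(⊤ : LieIdeal F L), (⊤ : LieIdeal F L)⁆ ∧
        I₁ ⊓ I₂ = ⊥ ∧
        (∀ x ∈ I₁, R x = 0 ∧ Rstar x = 0) ∧
        (∀ x ∈ I₂, R x + Rstar x + lam • x = 0)) :=
  stmt_13_general F L ω hnd hsymm hinv ι a b R Rstar hR hadj hCYBE hinvr lam hlam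
end

section
/- Suppose R is a Rota–Baxter operator of nonzero weight λ on L and R(a) + R*(a) + λa = 0 for all a ∈ L. Then r is a solution of the classical Yang–Baxter equation and r + τ(r) is L-invariant. -/
/-!
Pairing with the nondegenerate form `ω` identifies `L ⊗ L` and `L ⊗ L ⊗ L` with bi- and trilinear
forms on `L`, so both tensor identities can be tested on `(x, z)` and `(x, y, z)`. Under this
identification `r` corresponds to `R` and `τ(r)` to its adjoint `R* = -R - λ`. The invariance of
`r + τ(r)` then says that `R + R* = -λ` commutes with `ad y`, while the CYBE tensor evaluates to
`ω([Ry, Rz], x) + ω([R*x, Rz], y) + ω([R*x, R*y], z)`, which vanishes because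
`[R*x, R*y] = -R*([Rx, y] + [x, Ry] + λ[x, y])` by the Rota–Baxter identity, and invariance of `ω`
makes the three terms cancel.
-/

open TensorProduct

section Pairing

variable {F L : Type*} [Field F] [AddCommGroup L] [Module F L] [FiniteDimensional F L]
  (ω : LinearMap.BilinForm F L) (hnd : ω.Nondegenerate)

noncomputable def tensorPairing₂ : (L ⊗[F] L) ≃ₗ[F] (L →ₗ[F] Module.Dual F L) :=
  TensorProduct.congr (ω.toDual hnd) (ω.toDual hnd) ≪≫ₗ
    dualTensorHomEquiv F L (Module.Dual F L)

@[simp]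
lemma tensorPairing₂_tmul (p q u w : L) :
    tensorPairing₂ ω hnd (p ⊗ₜ[F] q) u w = ω p u * ω q w := by
  simp [tensorPairing₂, dualTensorHomEquiv, LinearMap.BilinForm.toDual_def]

noncomputable def tensorPairing₃ :
    (L ⊗[F] (L ⊗[F] L)) ≃ₗ[F] (L →ₗ[F] L →ₗ[F] Module.Dual F L) :=
  TensorProduct.congr (ω.toDual hnd) (tensorPairing₂ ω hnd) ≪≫ₗ
    dualTensorHomEquiv F L (L →ₗ[F] Module.Dual F L)

@[simp]
lemma tensorPairing₃_tmul (p q r u v w : L) :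
    tensorPairing₃ ω hnd (p ⊗ₜ[F] (q ⊗ₜ[F] r)) u v w = ω p u * (ω q v * ω r w) := by
  simp [tensorPairing₃, dualTensorHomEquiv, LinearMap.BilinForm.toDual_def]

end Pairing

section QuadraticLie

variable {F L ι : Type*} [Field F] [LieRing L] [LieAlgebra F L] [Fintype ι]
  (ω : LinearMap.BilinForm F L)

lemma bilin_lie_sum_smul_sum_smul (c d : ι → F) (u v : ι → L) (w : L) :
    ω ⁅∑ i, c i • u i, ∑ j, d j • v j⁆ w = ∑ i, ∑ j, c i * d j * ω ⁅u i, v j⁆ w := by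
  simp only [sum_lie_sum, smul_lie, lie_smul, map_sum, map_smul, LinearMap.sum_apply,
    LinearMap.smul_apply, smul_eq_mul]
  exact Finset.sum_congr rfl fun i _ => Finset.sum_congr rfl fun j _ => by ring

lemma bilin_lie_cyclic (hsymm : ∀ x y : L, ω x y = ω y x)
    (hinv : ∀ x y z : L, ω ⁅x, y⁆ z = ω x ⁅y, z⁆) (u v w : L) :
    ω ⁅u, v⁆ w = ω ⁅v, w⁆ u :=
  (hinv u v w).trans (hsymm u ⁅v, w⁆)

lemma adjoint_eq_sum (hnd : ω.Nondegenerate) (hsymm : ∀ x y : L, ω x y = ω y x)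
    {a b : ι → L} {R Rstar : L →ₗ[F] L} (hR : ∀ x : L, R x = ∑ i, ω (b i) x • a i)
    (hadj : ∀ x y : L, ω (R x) y = ω x (Rstar y)) (u : L) :
    Rstar u = ∑ i, ω (a i) u • b i := by
  refine sub_eq_zero.mp (hnd.1 _ fun w => ?_)
  rw [map_sub, LinearMap.sub_apply, hsymm, ← hadj, hR, sub_eq_zero]
  simp only [map_sum, map_smul, LinearMap.sum_apply, LinearMap.smul_apply, smul_eq_mul]
  exact Finset.sum_congr rfl fun i _ => mul_comm _ _

lemma tensorPairing₃_cybe [FiniteDimensional F L] (hnd : ω.Nondegenerate) {a b : ι → L}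
    {R Rstar : L →ₗ[F] L} (hR : ∀ x : L, R x = ∑ i, ω (b i) x • a i)
    (hRstar_sum : ∀ x : L, Rstar x = ∑ i, ω (a i) x • b i) (x y z : L) :
    tensorPairing₃ ω hnd (∑ i, ∑ j, (⁅a i, a j⁆ ⊗ₜ[F] (b i ⊗ₜ[F] b j)
        - a i ⊗ₜ[F] (⁅a j, b i⁆ ⊗ₜ[F] b j) + a i ⊗ₜ[F] (a j ⊗ₜ[F] ⁅b i, b j⁆))) x y z
      = ω ⁅R y, R z⁆ x + ω ⁅Rstar x, R z⁆ y + ω ⁅Rstar x, Rstar y⁆ z := by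
  simp only [sub_eq_add_neg, ← tmul_neg]
  simp only [hR, hRstar_sum, bilin_lie_sum_smul_sum_smul, map_sum, map_add, LinearMap.sum_apply,
    LinearMap.add_apply, tensorPairing₃_tmul, ← Finset.sum_add_distrib]
  refine Finset.sum_congr rfl fun i _ => Finset.sum_congr rfl fun j _ => ?_
  rw [← lie_skew (b i) (a j)]
  simp only [map_neg, LinearMap.neg_apply]
  ring

lemma tensorPairing₂_invariance [FiniteDimensional F L] (hnd : ω.Nondegenerate)
    (hinv : ∀ x y z : L, ω ⁅x, y⁆ z = ω x ⁅y, z⁆) {a b : ι → L}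
    {R Rstar : L →ₗ[F] L} (hR : ∀ x : L, R x = ∑ i, ω (b i) x • a i)
    (hRstar_sum : ∀ x : L, Rstar x = ∑ i, ω (a i) x • b i) (y x z : L) :
    tensorPairing₂ ω hnd (∑ i, (⁅a i, y⁆ ⊗ₜ[F] b i + a i ⊗ₜ[F] ⁅b i, y⁆
        + ⁅b i, y⁆ ⊗ₜ[F] a i + b i ⊗ₜ[F] ⁅a i, y⁆)) x z
      = ω (R ⁅y, x⁆ + Rstar ⁅y, x⁆) z + ω (R x + Rstar x) ⁅y, z⁆ := by
  simp only [hR, hRstar_sum, hinv, map_sum, map_add, map_smul, LinearMap.sum_apply,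
    LinearMap.add_apply, LinearMap.smul_apply, smul_eq_mul, tensorPairing₂_tmul,
    ← Finset.sum_add_distrib]
  refine Finset.sum_congr rfl fun i _ => ?_
  ring

variable {R Rstar : L →ₗ[F] L} {lam : F}

lemma bilin_lie_adjoint_adjoint (hsymm : ∀ x y : L, ω x y = ω y x)
    (hadj : ∀ x y : L, ω (R x) y = ω x (Rstar y))
    (hRB : ∀ x y : L, ⁅R x, R y⁆ = R (⁅R x, y⁆ + ⁅x, R y⁆ + lam • ⁅x, y⁆))
    (hRstar : ∀ x : L, Rstar x = -(R x + lam • x)) (x y z : L) :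
    ω ⁅Rstar x, Rstar y⁆ z = -ω (⁅R x, y⁆ + ⁅x, R y⁆ + lam • ⁅x, y⁆) (R z) := by
  have hlie : ⁅Rstar x, Rstar y⁆ = -Rstar (⁅R x, y⁆ + ⁅x, R y⁆ + lam • ⁅x, y⁆) := by
    rw [hRstar, hRstar, hRstar, neg_lie, lie_neg, neg_neg, neg_neg, add_lie, lie_add, lie_add,
      hRB]
    simp only [smul_lie, lie_smul, smul_add]
    abel
  rw [hlie, map_neg, LinearMap.neg_apply, hsymm, ← hadj, hsymm]

lemma cybe_form_eq_zero (hsymm : ∀ x y : L, ω x y = ω y x)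
    (hinv : ∀ x y z : L, ω ⁅x, y⁆ z = ω x ⁅y, z⁆)
    (hadj : ∀ x y : L, ω (R x) y = ω x (Rstar y))
    (hRB : ∀ x y : L, ⁅R x, R y⁆ = R (⁅R x, y⁆ + ⁅x, R y⁆ + lam • ⁅x, y⁆))
    (hRstar : ∀ x : L, Rstar x = -(R x + lam • x)) (x y z : L) :
    ω ⁅R y, R z⁆ x + ω ⁅Rstar x, R z⁆ y + ω ⁅Rstar x, Rstar y⁆ z = 0 := by
  have cyc := bilin_lie_cyclic ω hsymm hinv
  have q1 : ω ⁅R x, y⁆ (R z) = -ω ⁅R x, R z⁆ y := by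
    rw [cyc, cyc, ← lie_skew, map_neg, LinearMap.neg_apply]
  have q2 : ω ⁅x, R y⁆ (R z) = ω ⁅R y, R z⁆ x := cyc _ _ _
  have q3 : ω ⁅x, y⁆ (R z) = -ω ⁅x, R z⁆ y := by
    rw [cyc, cyc, ← lie_skew, map_neg, LinearMap.neg_apply]
  rw [bilin_lie_adjoint_adjoint ω hsymm hadj hRB hRstar, hRstar x]
  simp only [map_add, map_smul, map_neg, neg_lie, add_lie, smul_lie, LinearMap.add_apply,
    LinearMap.smul_apply, LinearMap.neg_apply, smul_eq_mul]
  linear_combination -q2 - q1 - lam * q3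

lemma invariance_form_eq_zero (hinv : ∀ x y z : L, ω ⁅x, y⁆ z = ω x ⁅y, z⁆)
    (hRstar : ∀ x : L, Rstar x = -(R x + lam • x)) (y x z : L) :
    ω (R ⁅y, x⁆ + Rstar ⁅y, x⁆) z + ω (R x + Rstar x) ⁅y, z⁆ = 0 := by
  have hsum : ∀ u, R u + Rstar u = -(lam • u) := fun u => by rw [hRstar]; abel
  rw [hsum, hsum, ← hinv]
  simp only [neg_lie, smul_lie, ← lie_skew x y, map_neg, map_smul, LinearMap.neg_apply,
    LinearMap.smul_apply, smul_eq_mul]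
  ring

end QuadraticLie

theorem stmt_15_general
    (F : Type*) [Field F]
    (L : Type*) [LieRing L] [LieAlgebra F L] [FiniteDimensional F L]
    (ω : LinearMap.BilinForm F L)
    (hnd : ω.Nondegenerate)
    (hsymm : ∀ x y : L, ω x y = ω y x)
    (hinv : ∀ x y z : L, ω ⁅x, y⁆ z = ω x ⁅y, z⁆)
    (ι : Type*) [Fintype ι] (a b : ι → L)
    (R Rstar : L →ₗ[F] L)
    (hR : ∀ x : L, R x = ∑ i, ω (b i) x • a i)
    (hadj : ∀ x y : L, ω (R x) y = ω x (Rstar y))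
    (lam : F)
    (hRB : ∀ x y : L, ⁅R x, R y⁆ = R (⁅R x, y⁆ + ⁅x, R y⁆ + lam • ⁅x, y⁆))
    (hth : ∀ x : L, R x + Rstar x + lam • x = 0) :
    (∑ i, ∑ j, (⁅a i, a j⁆ ⊗ₜ[F] (b i ⊗ₜ[F] b j)
        - a i ⊗ₜ[F] (⁅a j, b i⁆ ⊗ₜ[F] b j)
        + a i ⊗ₜ[F] (a j ⊗ₜ[F] ⁅b i, b j⁆)) = (0 : L ⊗[F] (L ⊗[F] L))) ∧
    (∀ y : L, ∑ i, (⁅a i, y⁆ ⊗ₜ[F] b i + a i ⊗ₜ[F] ⁅b i, y⁆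
        + ⁅b i, y⁆ ⊗ₜ[F] a i + b i ⊗ₜ[F] ⁅a i, y⁆) = (0 : L ⊗[F] L)) := by
  have hRstar_sum := adjoint_eq_sum ω hnd hsymm hR hadj
  have hRstar : ∀ x, Rstar x = -(R x + lam • x) := fun x =>
    eq_neg_of_add_eq_zero_right (by rw [add_right_comm]; exact hth x)
  refine ⟨?_, fun y => ?_⟩
  · rw [← (tensorPairing₃ ω hnd).map_eq_zero_iff]
    ext x y z
    rw [tensorPairing₃_cybe ω hnd hR hRstar_sum]
    exact cybe_form_eq_zero ω hsymm hinv hadj hRB hRstar x y z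
  · rw [← (tensorPairing₂ ω hnd).map_eq_zero_iff]
    ext x z
    rw [tensorPairing₂_invariance ω hnd hinv hR hRstar_sum]
    exact invariance_form_eq_zero ω hinv hRstar y x z

theorem stmt_15
    (F : Type*) [Field F] [CharZero F]
    (L : Type*) [LieRing L] [LieAlgebra F L] [FiniteDimensional F L]
    (ω : LinearMap.BilinForm F L)
    (hnd : ω.Nondegenerate)
    (hsymm : ∀ x y : L, ω x y = ω y x)
    (hinv : ∀ x y z : L, ω ⁅x, y⁆ z = ω x ⁅y, z⁆)
    (ι : Type*) [Fintype ι] (a b : ι → L)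
    (R Rstar : L →ₗ[F] L)
    (hR : ∀ x : L, R x = ∑ i, ω (b i) x • a i)
    (hadj : ∀ x y : L, ω (R x) y = ω x (Rstar y))
    (lam : F) (hlam : lam ≠ 0)
    (hRB : ∀ x y : L, ⁅R x, R y⁆ = R (⁅R x, y⁆ + ⁅x, R y⁆ + lam • ⁅x, y⁆))
    (hth : ∀ x : L, R x + Rstar x + lam • x = 0) :
    (∑ i, ∑ j, (⁅a i, a j⁆ ⊗ₜ[F] (b i ⊗ₜ[F] b j)
        - a i ⊗ₜ[F] (⁅a j, b i⁆ ⊗ₜ[F] b j)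
        + a i ⊗ₜ[F] (a j ⊗ₜ[F] ⁅b i, b j⁆)) = (0 : L ⊗[F] (L ⊗[F] L))) ∧
    (∀ y : L, ∑ i, (⁅a i, y⁆ ⊗ₜ[F] b i + a i ⊗ₜ[F] ⁅b i, y⁆
        + ⁅b i, y⁆ ⊗ₜ[F] a i + b i ⊗ₜ[F] ⁅a i, y⁆) = (0 : L ⊗[F] L)) :=
  stmt_15_general F L ω hnd hsymm hinv ι a b R Rstar hR hadj lam hRB hth
end
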